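/- arXiv:2112.02941 — 6 statements merged into one kernel-verified Lean document; each statement's English description precedes it below -/
import Mathlib

section
/- Let p ∈ (0,1] and T ∈ ℕ. Then there exists a unique z ∈ [1,∞) satisfying z = p·Σ_{s=0}^{T} P_μ(τ_∂ > s)·(1 − (1−p)/z)^{−(s+1)}. (Proposition 4.1, case T < ∞.) -/
open Finset Filter

/-- Extend a path `f : Fin (n+1) → χ` to a function `ℕ → χ` by freezing its last value. -/
noncomputable def pad {χ : Type*} {n : ℕ} (f : Fin (n + 1) → χ) : ℕ → χ :=
  fun i => f ⟨min i n, Nat.lt_succ_of_le (min_le_right i n)⟩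

/-- `pathW K μ t f = μ(f 0) · ∏_{i=0}^{t-1} K(f i, f (i+1))`, the weight
`P_μ(X_0 = f 0, …, X_t = f t, τ_∂ > t)` of a surviving path. -/
noncomputable def pathW {χ : Type*} (K : χ → χ → ℝ) (μ : χ → ℝ) (t : ℕ) (f : ℕ → χ) : ℝ :=
  μ (f 0) * ∏ i ∈ Finset.range t, K (f i) (f (i + 1))

/-- The survival probability `P_μ(τ_∂ > t) = ∑_{f : {0,…,t} → χ} W_t(f)`. -/
noncomputable def surv {χ : Type*} [Fintype χ] (K : χ → χ → ℝ) (μ : χ → ℝ) (t : ℕ) : ℝ :=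
  ∑ f : Fin (t + 1) → χ, pathW K μ t (pad f)

lemma surv_nonneg {χ : Type*} [Fintype χ] (K : χ → χ → ℝ) (hK0 : ∀ x y, 0 ≤ K x y)
    (μ : χ → ℝ) (hμ0 : ∀ x, 0 ≤ μ x) (t : ℕ) : 0 ≤ surv K μ t := by
  apply Finset.sum_nonneg
  intro f _
  exact mul_nonneg (hμ0 _) (Finset.prod_nonneg fun i _ => hK0 _ _)

lemma surv_zero {χ : Type*} [Fintype χ] (K : χ → χ → ℝ)
    (μ : χ → ℝ) (hμ1 : ∑ x, μ x = 1) : surv K μ 0 = 1 := by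
  have : surv K μ 0 = ∑ f : Fin 1 → χ, μ (f 0) := by
    unfold surv pathW pad
    simp
  rw [this, ← hμ1]
  exact Fintype.sum_equiv (Equiv.funUnique (Fin 1) χ) _ _ (fun f => rfl)

/-- Proposition 4.1 (case `T < ∞`): for `p ∈ (0,1]` and `T ∈ ℕ` there is a unique
`z ∈ [1,∞)` with `z = p·∑_{s=0}^{T} P_μ(τ_∂ > s)·(1 − (1−p)/z)^{−(s+1)}`. -/
theorem exists_unique_fixed_point_finite_horizon
    {χ : Type*} [Fintype χ] [Nonempty χ]
    (K : χ → χ → ℝ) (hK0 : ∀ x y, 0 ≤ K x y) (hK1 : ∀ x, ∑ y, K x y ≤ 1)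
    (μ : χ → ℝ) (hμ0 : ∀ x, 0 ≤ μ x) (hμ1 : ∑ x, μ x = 1)
    (p : ℝ) (hp : 0 < p) (hp1 : p ≤ 1) (T : ℕ) :
    ∃! z : ℝ, 1 ≤ z ∧
      z = p * ∑ s ∈ Finset.range (T + 1),
        surv K μ s * ((1 - (1 - p) / z)⁻¹) ^ (s + 1) := by
  have hq0 : (0:ℝ) ≤ 1 - p := by linarith
  set g : ℝ → ℝ := fun z => p * ∑ s ∈ Finset.range (T + 1),
      surv K μ s * ((1 - (1 - p) / z)⁻¹) ^ (s + 1) with hg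
  have hsnn : ∀ s, 0 ≤ surv K μ s := surv_nonneg K hK0 μ hμ0
  have hpos : ∀ z : ℝ, 1 ≤ z → 0 < 1 - (1 - p) / z := by
    intro z hz
    have : (1 - p) / z ≤ 1 - p := div_le_self hq0 hz
    linarith
  -- g is antitone on [1, ∞)
  have hganti : ∀ a b : ℝ, 1 ≤ a → a ≤ b → g b ≤ g a := by
    intro a b ha hab
    have hb : 1 ≤ b := ha.trans hab
    have ha0 : (0:ℝ) < a := lt_of_lt_of_le one_pos ha
    have hb0 : (0:ℝ) < b := lt_of_lt_of_le one_pos hb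
    apply mul_le_mul_of_nonneg_left _ hp.le
    apply Finset.sum_le_sum
    intro s _
    apply mul_le_mul_of_nonneg_left _ (hsnn s)
    apply pow_le_pow_left₀ (inv_nonneg.2 (hpos b hb).le)
    have hdiv : (1 - p) / b ≤ (1 - p) / a := by
      rw [div_le_div_iff₀ hb0 ha0]
      exact mul_le_mul_of_nonneg_left hab hq0
    have h1 : 1 - (1 - p) / a ≤ 1 - (1 - p) / b := by linarith
    exact inv_anti₀ (hpos a ha) h1
  have hmono : StrictMonoOn (fun z => z - g z) (Set.Ici 1) := by
    intro a ha b hb hab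
    have := hganti a b ha hab.le
    dsimp only
    linarith
  -- g 1 ≥ 1
  have hg1 : 1 ≤ g 1 := by
    have h10 : (1:ℝ) - (1 - p) / 1 = p := by ring
    have hterm : surv K μ 0 * ((1 - (1 - p) / 1)⁻¹) ^ (0 + 1) = p⁻¹ := by
      rw [surv_zero K μ hμ1, h10]; ring
    have hsum : p⁻¹ ≤ ∑ s ∈ Finset.range (T + 1),
        surv K μ s * ((1 - (1 - p) / 1)⁻¹) ^ (s + 1) := by
      rw [← hterm]
      apply Finset.single_le_sum (f := fun s =>
        surv K μ s * ((1 - (1 - p) / 1)⁻¹) ^ (s + 1))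
      · intro s _
        exact mul_nonneg (hsnn s) (pow_nonneg (inv_nonneg.2 (hpos 1 le_rfl).le) _)
      · simp
    calc (1:ℝ) = p * p⁻¹ := by rw [mul_inv_cancel₀ hp.ne']
    _ ≤ g 1 := mul_le_mul_of_nonneg_left hsum hp.le
  set M : ℝ := max 1 (g 1) with hM
  have hM1 : (1:ℝ) ≤ M := le_max_left _ _
  have hgM : g 1 ≤ M := le_max_right _ _
  -- continuity of z ↦ z - g z on [1, M]
  have hcont : ContinuousOn (fun z => z - g z) (Set.Icc 1 M) := by
    apply ContinuousOn.sub continuousOn_id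
    apply ContinuousOn.mul continuousOn_const
    apply continuousOn_finset_sum
    intro s _
    apply ContinuousOn.mul continuousOn_const
    apply ContinuousOn.pow
    apply ContinuousOn.inv₀
    · apply ContinuousOn.sub continuousOn_const
      apply ContinuousOn.div continuousOn_const continuousOn_id
      intro z hz
      exact ne_of_gt (lt_of_lt_of_le one_pos hz.1)
    · intro z hz
      exact ne_of_gt (hpos z hz.1)
  have h1le : (fun z => z - g z) 1 ≤ 0 := by dsimp only; linarith
  have hMle : 0 ≤ (fun z => z - g z) M := by
    have := hganti 1 M le_rfl hM1
    dsimp only; linarith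
  obtain ⟨z, hzmem, hz0⟩ := intermediate_value_Icc hM1 hcont ⟨h1le, hMle⟩
  refine ⟨z, ⟨hzmem.1, ?_⟩, ?_⟩
  · exact sub_eq_zero.mp hz0
  · rintro y ⟨hy1, hyeq⟩
    have hy0 : y - g y = 0 := sub_eq_zero_of_eq hyeq
    exact hmono.injOn (Set.mem_Ici.2 hy1) (Set.mem_Ici.2 hzmem.1) (by
      dsimp only at hz0 ⊢; rw [hy0, hz0])
end

section
/- Let p ∈ (0,1] and assume P_x(τ_∂ < ∞) = 1 for every x ∈ χ (equivalently, (K^t 𝟙)(x) → 0 as t → ∞ for every x). Then there exists a unique z ∈ [1,∞) such that the series Σ_{s=0}^{∞} P_μ(τ_∂ > s)·(1 − (1−p)/z)^{−(s+1)} converges and z = p times its sum; i.e., the infinite-horizon fixed point equation z = p·Σ_{s=0}^{∞} P_μ(τ_∂ > s)·(1 − (1−p)/z)^{−(s+1)} has exactly one solution z in [1,∞) (where z is counted as a solution only when the series converges). (Proposition 4.1, case T = ∞.) -/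
/-!
Write `a s = P_μ(τ_∂ > s)` and `r z = (1 - (1 - p) / z)⁻¹`. The map `z ↦ p ∑ a s (r z)^(s+1)` is
antitone on `[1, ∞)`, which gives uniqueness; existence is a matter of knowing where the power
series `∑ a s u^(s+1)` converges. As `a s = μ ⬝ K^s 𝟙` and killing gives `K^t 𝟙 ≤ 1/2` for some
`t`, it converges at `u = 1`. If it converges at `u`, then on the states where
`v = ∑ (uK)^s 𝟙` is finite we have `v = 𝟙 + uKv` and `1 ≤ v ≤ m`, hence `uKv ≤ (1 - 1/m) v` and
`(uK)^s 𝟙` decays geometrically: the domain of convergence is open to the right. So either the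
series converges at `r 1 = 1/p`, where the map is `≥ 1`, or it diverges at the end `R ≤ 1/p` of
its interval of convergence and the map exceeds `z` when `r z` is close to `R`; in both cases
the intermediate value theorem produces the fixed point.
-/

open Finset Filter

open Matrix Topology

lemma summable_of_le_mul_add {f : ℕ → ℝ} (hf : ∀ n, 0 ≤ f n) {c : ℝ} (hc : c < 1) {t : ℕ}
    (h : ∀ n, f (n + t) ≤ c * f n) : Summable f := by
  refine summable_of_sum_range_le (c := (∑ i ∈ range t, f i) / (1 - c)) hf fun n => ?_
  have hshift : ∑ i ∈ range (t + n), f i ≤ ∑ i ∈ range t, f i + c * ∑ i ∈ range n, f i := by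
    rw [sum_range_add, mul_sum]
    gcongr with i
    rw [add_comm]
    exact h i
  have hmono : ∑ i ∈ range n, f i ≤ ∑ i ∈ range (t + n), f i :=
    sum_le_sum_of_subset_of_nonneg (range_subset_range.2 (by omega)) fun i _ _ => hf i
  rw [le_div_iff₀ (by linarith)]
  linarith

namespace Matrix

variable {n : Type*} [Fintype n] {A : Matrix n n ℝ}

lemma mulVec_mono_of_nonneg (hA : ∀ i j, 0 ≤ A i j) {v w : n → ℝ} (h : v ≤ w) :
    A *ᵥ v ≤ A *ᵥ w :=
  fun i => dotProduct_le_dotProduct_of_nonneg_left h (hA i)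

variable [DecidableEq n]

lemma pow_mulVec_mono_of_nonneg (hA : ∀ i j, 0 ≤ A i j) {v w : n → ℝ} (h : v ≤ w) (s : ℕ) :
    A ^ s *ᵥ v ≤ A ^ s *ᵥ w := by
  induction s with
  | zero => simpa using h
  | succ s ih => simpa only [pow_succ', ← mulVec_mulVec] using mulVec_mono_of_nonneg hA ih

lemma pow_mulVec_nonneg (hA : ∀ i j, 0 ≤ A i j) {v : n → ℝ} (hv : 0 ≤ v) (s : ℕ) :
    0 ≤ A ^ s *ᵥ v := by
  simpa using pow_mulVec_mono_of_nonneg hA hv s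

lemma pow_add_mulVec_one_le (hA : ∀ i j, 0 ≤ A i j) {c : ℝ} {t : ℕ} (h : A ^ t *ᵥ 1 ≤ c • 1)
    (s : ℕ) : A ^ (s + t) *ᵥ 1 ≤ c • (A ^ s *ᵥ 1) := by
  rw [pow_add, ← mulVec_mulVec, ← mulVec_smul]
  exact pow_mulVec_mono_of_nonneg hA h s

lemma summable_mul_pow_mulVec_one (hA : ∀ i j, 0 ≤ A i j) {x : n}
    (hx : Summable fun s => (A ^ s *ᵥ 1) x) (y : n) :
    Summable fun s => A x y * (A ^ s *ᵥ 1) y := by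
  refine ((summable_nat_add_iff 1).mpr hx).of_nonneg_of_le
    (fun s => mul_nonneg (hA x y) (pow_mulVec_nonneg hA zero_le_one s y)) fun s => ?_
  rw [pow_succ', ← mulVec_mulVec]
  exact single_le_sum (f := fun z => A x z * (A ^ s *ᵥ 1) z)
    (fun z _ => mul_nonneg (hA x z) (pow_mulVec_nonneg hA zero_le_one s z)) (mem_univ y)

lemma tsum_pow_mulVec_one_apply (hA : ∀ i j, 0 ≤ A i j) {x : n}
    (hx : Summable fun s => (A ^ s *ᵥ 1) x) :
    ∑' s, (A ^ s *ᵥ 1) x = 1 + ∑ y, A x y * ∑' s, (A ^ s *ᵥ 1) y := by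
  rw [hx.tsum_eq_zero_add]
  simp only [pow_zero, one_mulVec, Pi.one_apply, pow_succ', ← mulVec_mulVec]
  simp_rw [← tsum_mul_left]
  rw [← Summable.tsum_finsetSum fun y _ => summable_mul_pow_mulVec_one hA hx y]
  rfl

lemma pow_mulVec_one_le_of_tsum_le (hA : ∀ i j, 0 ≤ A i j) {m : ℝ} (hm : 1 ≤ m)
    (hv : ∀ x, ∑' s, (A ^ s *ᵥ 1) x ≤ m) (s : ℕ) (x : n)
    (hx : Summable fun s => (A ^ s *ᵥ 1) x) :
    (A ^ s *ᵥ 1) x ≤ (1 - m⁻¹) ^ s * ∑' s, (A ^ s *ᵥ 1) x := by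
  induction s generalizing x with
  | zero => simpa using hx.le_tsum 0 fun s _ => pow_mulVec_nonneg hA zero_le_one s x
  | succ s ih =>
    set v : n → ℝ := fun y => ∑' s, (A ^ s *ᵥ 1) y
    have hterm (y : n) : A x y * (A ^ s *ᵥ 1) y ≤ A x y * ((1 - m⁻¹) ^ s * v y) := by
      rcases (hA x y).eq_or_lt with h | h
      · simp [← h]
      · exact mul_le_mul_of_nonneg_left
          (ih y ((summable_mul_left_iff h.ne').mp (summable_mul_pow_mulVec_one hA hx y))) h.le
    have hres : v x = 1 + ∑ y, A x y * v y := tsum_pow_mulVec_one_apply hA hx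
    have hδ : 0 ≤ 1 - m⁻¹ := sub_nonneg.2 (inv_le_one_of_one_le₀ hm)
    -- `v = 1 + A v` and `v ≤ m` give `A v ≤ (1 - m⁻¹) v`
    have hcontract : v x - 1 ≤ (1 - m⁻¹) * v x := by
      have : v x * m⁻¹ ≤ 1 := by
        rw [← div_eq_mul_inv, div_le_one (by linarith)]
        exact hv x
      linarith
    calc (A ^ (s + 1) *ᵥ 1) x = ∑ y, A x y * (A ^ s *ᵥ 1) y := by
          rw [pow_succ', ← mulVec_mulVec]
          rfl
      _ ≤ ∑ y, A x y * ((1 - m⁻¹) ^ s * v y) := sum_le_sum fun y _ => hterm y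
      _ = (1 - m⁻¹) ^ s * (v x - 1) := by
          rw [hres, add_sub_cancel_left, mul_sum]
          exact sum_congr rfl fun y _ => by ring
      _ ≤ (1 - m⁻¹) ^ s * ((1 - m⁻¹) * v x) :=
          mul_le_mul_of_nonneg_left hcontract (pow_nonneg hδ s)
      _ = (1 - m⁻¹) ^ (s + 1) * v x := by ring

theorem exists_one_lt_summable_dotProduct_pow_mulVec_one_mul_pow (hA : ∀ i j, 0 ≤ A i j)
    {μ : n → ℝ} (hμ : 0 ≤ μ) (h : Summable fun s => μ ⬝ᵥ (A ^ s *ᵥ 1)) :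
    ∃ ρ > 1, Summable fun s => μ ⬝ᵥ (A ^ s *ᵥ 1) * ρ ^ s := by
  have hq (s : ℕ) : 0 ≤ A ^ s *ᵥ 1 := pow_mulVec_nonneg hA zero_le_one s
  have hsupp (x : n) (hx : μ x ≠ 0) : Summable fun s => (A ^ s *ᵥ 1) x := by
    refine (summable_mul_left_iff hx).mp
      (h.of_nonneg_of_le (fun s => mul_nonneg (hμ x) (hq s x)) fun s => ?_)
    exact single_le_sum (f := fun y => μ y * (A ^ s *ᵥ 1) y)
      (fun y _ => mul_nonneg (hμ y) (hq s y)) (mem_univ x)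
  set v : n → ℝ := fun x => ∑' s, (A ^ s *ᵥ 1) x
  have hv0 (x : n) : 0 ≤ v x := tsum_nonneg fun s => hq s x
  set m := 1 + ∑ x, v x
  have hm : 1 ≤ m := by linarith [sum_nonneg fun x (_ : x ∈ univ) => hv0 x]
  have hvm (x : n) : v x ≤ m := by linarith [single_le_sum (fun y _ => hv0 y) (mem_univ x)]
  set δ := 1 - m⁻¹
  have hδ0 : 0 ≤ δ := sub_nonneg.2 (inv_le_one_of_one_le₀ hm)
  have hδ1 : δ < 1 := by linarith [inv_pos.2 (by linarith : (0 : ℝ) < m)]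
  have hdecay (s : ℕ) : μ ⬝ᵥ (A ^ s *ᵥ 1) ≤ (μ ⬝ᵥ v) * δ ^ s :=
    calc μ ⬝ᵥ (A ^ s *ᵥ 1) = ∑ x, μ x * (A ^ s *ᵥ 1) x := rfl
      _ ≤ ∑ x, μ x * (δ ^ s * v x) := sum_le_sum fun x _ => by
          by_cases hx : μ x = 0
          · simp [hx]
          · exact mul_le_mul_of_nonneg_left
              (pow_mulVec_one_le_of_tsum_le hA hm hvm s x (hsupp x hx)) (hμ x)
      _ = (μ ⬝ᵥ v) * δ ^ s := by
          rw [dotProduct, sum_mul]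
          exact sum_congr rfl fun x _ => by ring
  set ρ := 2 / (1 + δ)
  have hρ0 : 0 ≤ δ * ρ := by positivity
  have hρ1 : δ * ρ < 1 := by
    rw [mul_div_assoc', div_lt_one (by linarith)]
    linarith
  refine ⟨ρ, by rw [gt_iff_lt, lt_div_iff₀ (by linarith)]; linarith, ?_⟩
  refine ((summable_geometric_of_lt_one hρ0 hρ1).mul_left (μ ⬝ᵥ v)).of_nonneg_of_le
    (fun s => mul_nonneg (dotProduct_nonneg_of_nonneg hμ (hq s)) (by positivity)) fun s => ?_
  calc μ ⬝ᵥ (A ^ s *ᵥ 1) * ρ ^ s ≤ (μ ⬝ᵥ v) * δ ^ s * ρ ^ s := by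
        gcongr
        exact hdecay s
    _ = (μ ⬝ᵥ v) * (δ * ρ) ^ s := by rw [mul_pow, mul_assoc]

end Matrix

section KilledChain

variable {χ : Type*}

lemma pad_zero {n : ℕ} (f : Fin (n + 1) → χ) : pad f 0 = f 0 := by
  simp [pad]

lemma pad_cons_succ {n : ℕ} (x : χ) (g : Fin (n + 1) → χ) (i : ℕ) :
    pad (Fin.cons x g : Fin (n + 2) → χ) (i + 1) = pad g i := by
  have h : (⟨min (i + 1) (n + 1), Nat.lt_succ_of_le (min_le_right _ _)⟩ : Fin (n + 2)) =
      Fin.succ ⟨min i n, Nat.lt_succ_of_le (min_le_right i n)⟩ := by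
    ext
    simp [Nat.succ_min_succ]
  simp only [pad, h, Fin.cons_succ]

variable [Fintype χ]

lemma surv_zero_s1 (K : χ → χ → ℝ) (ν : χ → ℝ) : surv K ν 0 = ∑ x, ν x := by
  simp only [surv, pathW, range_zero, prod_empty, mul_one, pad_zero]
  exact (Equiv.funUnique (Fin 1) χ).sum_comp ν

lemma surv_succ (K : χ → χ → ℝ) (ν : χ → ℝ) (t : ℕ) :
    surv K ν (t + 1) = ∑ x, ν x * surv K (K x) t := by
  unfold surv pathW
  rw [← (Fin.consEquiv fun _ : Fin (t + 2) => χ).sum_comp, Fintype.sum_prod_type]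
  refine sum_congr rfl fun x _ => ?_
  rw [mul_sum]
  refine sum_congr rfl fun g _ => ?_
  rw [show (Fin.consEquiv fun _ : Fin (t + 2) => χ) (x, g) = Fin.cons x g from rfl]
  simp only [prod_range_succ', pad_cons_succ, pad_zero, Fin.cons_zero]
  ring

variable [DecidableEq χ]

lemma surv_eq_dotProduct (K : χ → χ → ℝ) (ν : χ → ℝ) (t : ℕ) :
    surv K ν t = ν ⬝ᵥ (of K ^ t *ᵥ 1) := by
  induction t generalizing ν with
  | zero => simp [surv_zero_s1, dotProduct]
  | succ t ih =>
    rw [surv_succ, pow_succ', ← mulVec_mulVec]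
    simp only [ih]
    rfl

lemma surv_single (K : χ → χ → ℝ) (t : ℕ) (x : χ) :
    surv K (fun y => if y = x then 1 else 0) t = (of K ^ t *ᵥ 1) x := by
  simp [surv_eq_dotProduct, dotProduct]

variable {K : χ → χ → ℝ} (hK : ∀ x y, 0 ≤ K x y) {μ : χ → ℝ} (hμ : ∀ x, 0 ≤ μ x)
include hK hμ

lemma surv_nonneg_s1 (t : ℕ) : 0 ≤ surv K μ t := by
  rw [surv_eq_dotProduct]
  exact dotProduct_nonneg_of_nonneg hμ (pow_mulVec_nonneg hK zero_le_one t)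

lemma summable_surv (hkill : ∀ x : χ,
      Tendsto (fun t => surv K (fun y => if y = x then 1 else 0) t) atTop (nhds 0)) :
    Summable (surv K μ) := by
  have hsmall : ∀ᶠ t in atTop, ∀ x, surv K (fun y => if y = x then 1 else 0) t ≤ 1 / 2 :=
    eventually_all.2 fun x => (hkill x).eventually (eventually_le_nhds one_half_pos)
  obtain ⟨t, ht⟩ := hsmall.exists
  have ht' : of K ^ t *ᵥ 1 ≤ (1 / 2 : ℝ) • 1 := fun x => by simpa [surv_single] using ht x
  refine summable_of_le_mul_add (surv_nonneg_s1 hK hμ) one_half_lt_one (t := t) fun s => ?_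
  rw [surv_eq_dotProduct, surv_eq_dotProduct, ← smul_eq_mul, ← dotProduct_smul]
  exact dotProduct_le_dotProduct_of_nonneg_left (pow_add_mulVec_one_le hK ht' s) hμ

lemma exists_gt_summable_surv_mul_pow {u : ℝ} (hu : 0 < u)
    (h : Summable fun s => surv K μ s * u ^ (s + 1)) :
    ∃ u' > u, Summable fun s => surv K μ s * u' ^ (s + 1) := by
  have hscale (s : ℕ) : μ ⬝ᵥ ((u • of K) ^ s *ᵥ 1) = surv K μ s * u ^ s := by
    rw [smul_pow, smul_mulVec, dotProduct_smul, surv_eq_dotProduct, smul_eq_mul, mul_comm]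
  obtain ⟨ρ, hρ, hρs⟩ := exists_one_lt_summable_dotProduct_pow_mulVec_one_mul_pow
    (A := u • of K) (fun i j => mul_nonneg hu.le (hK i j)) hμ
    (by simpa only [hscale, pow_succ, ← mul_assoc, summable_mul_right_iff hu.ne'] using h)
  refine ⟨u * ρ, lt_mul_of_one_lt_right hu hρ, ?_⟩
  refine (hρs.mul_right (u * ρ)).congr fun s => ?_
  rw [hscale, pow_succ, mul_pow]
  ring

end KilledChain

section PowerSeries

variable {a : ℕ → ℝ} (ha : ∀ s, 0 ≤ a s)
include ha

lemma summable_mul_pow_of_le {u w : ℝ} (hu : 0 ≤ u) (huw : u ≤ w)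
    (hw : Summable fun s => a s * w ^ (s + 1)) : Summable fun s => a s * u ^ (s + 1) :=
  hw.of_nonneg_of_le (fun s => mul_nonneg (ha s) (pow_nonneg hu _))
    fun s => mul_le_mul_of_nonneg_left (pow_le_pow_left₀ hu huw _) (ha s)

lemma tsum_mul_pow_le_of_le {u w : ℝ} (hu : 0 ≤ u) (huw : u ≤ w)
    (hw : Summable fun s => a s * w ^ (s + 1)) :
    ∑' s, a s * u ^ (s + 1) ≤ ∑' s, a s * w ^ (s + 1) :=
  (summable_mul_pow_of_le ha hu huw hw).tsum_le_tsum
    (fun s => mul_le_mul_of_nonneg_left (pow_le_pow_left₀ hu huw _) (ha s)) hw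

lemma le_tsum_mul_pow (ha0 : 1 ≤ a 0) {u : ℝ} (hu : 0 ≤ u)
    (h : Summable fun s => a s * u ^ (s + 1)) : u ≤ ∑' s, a s * u ^ (s + 1) :=
  calc u ≤ a 0 * u ^ (0 + 1) := by simpa using mul_le_mul_of_nonneg_right ha0 hu
    _ ≤ _ := h.le_tsum 0 fun s _ => mul_nonneg (ha s) (pow_nonneg hu _)

lemma continuousOn_tsum_mul_pow {c : ℝ} (hc : Summable fun s => a s * c ^ (s + 1)) :
    ContinuousOn (fun u => ∑' s, a s * u ^ (s + 1)) (Set.Icc 0 c) := by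
  refine continuousOn_tsum (fun s => (continuous_const.mul (continuous_pow _)).continuousOn) hc
    fun s u hu => ?_
  rw [norm_mul, norm_pow, Real.norm_of_nonneg (ha s), Real.norm_of_nonneg hu.1]
  exact mul_le_mul_of_nonneg_left (pow_le_pow_left₀ hu.1 hu.2 _) (ha s)

variable {u₀ w : ℝ} (hu₀ : 0 ≤ u₀) (hw : 0 ≤ w) (h₀ : Summable fun s => a s * u₀ ^ (s + 1))
  (hwdiv : ¬ Summable fun s => a s * w ^ (s + 1))
  (hopen : ∀ u, u₀ ≤ u → (Summable fun s => a s * u ^ (s + 1)) →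
    ∃ u' > u, Summable fun s => a s * u' ^ (s + 1))
include hu₀ hw h₀ hwdiv hopen

lemma exists_boundary_of_not_summable :
    ∃ R, u₀ < R ∧ R ≤ w ∧ (¬ Summable fun s => a s * R ^ (s + 1)) ∧
      ∀ u ∈ Set.Ico u₀ R, Summable fun s => a s * u ^ (s + 1) := by
  set T := {u | u₀ ≤ u ∧ Summable fun s => a s * u ^ (s + 1)}
  have hTw : ∀ u ∈ T, u ≤ w := fun u hu =>
    le_of_not_gt fun hwu => hwdiv (summable_mul_pow_of_le ha hw hwu.le hu.2)
  have hu₀T : u₀ ∈ T := ⟨le_rfl, h₀⟩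
  have hR₀ : u₀ ≤ sSup T := le_csSup ⟨w, hTw⟩ hu₀T
  have hR : ¬ Summable fun s => a s * sSup T ^ (s + 1) := fun hR => by
    obtain ⟨u', hu', hs⟩ := hopen _ hR₀ hR
    exact (le_csSup ⟨w, hTw⟩ ⟨hR₀.trans hu'.le, hs⟩).not_gt hu'
  refine ⟨sSup T, hR₀.lt_of_ne fun h => hR (h ▸ h₀), csSup_le ⟨u₀, hu₀T⟩ hTw, hR,
    fun u hu => ?_⟩
  obtain ⟨t, ht, hut⟩ := exists_lt_of_lt_csSup ⟨u₀, hu₀T⟩ hu.2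
  exact summable_mul_pow_of_le ha (hu₀.trans hu.1) hut.le ht.2

lemma exists_lt_tsum_mul_pow_of_not_summable (B : ℝ) :
    ∃ u, u₀ ≤ u ∧ u < w ∧ (Summable fun s => a s * u ^ (s + 1)) ∧
      B < ∑' s, a s * u ^ (s + 1) := by
  obtain ⟨R, hu₀R, hRw, hR, hbelow⟩ :=
    exists_boundary_of_not_summable ha hu₀ hw h₀ hwdiv hopen
  have hR0 : 0 ≤ R := hu₀.trans hu₀R.le
  obtain ⟨N, hN⟩ : ∃ N, B < ∑ s ∈ range N, a s * R ^ (s + 1) :=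
    (((not_summable_iff_tendsto_nat_atTop_of_nonneg fun s =>
      mul_nonneg (ha s) (pow_nonneg hR0 _)).1 hR).eventually_gt_atTop B).exists
  have hnear : ∀ᶠ u in 𝓝[<] R, B < ∑ s ∈ range N, a s * u ^ (s + 1) :=
    ((continuous_finsetSum _ fun s _ => continuous_const.mul (continuous_pow _)).tendsto R
      |>.eventually (lt_mem_nhds hN)).filter_mono nhdsWithin_le_nhds
  obtain ⟨u, hBu, hu⟩ := (hnear.and (Ioo_mem_nhdsLT hu₀R)).exists
  have hs := hbelow u ⟨hu.1.le, hu.2⟩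
  exact ⟨u, hu.1.le, hu.2.trans_le hRw, hs, hBu.trans_le
    (hs.sum_le_tsum _ fun s _ => mul_nonneg (ha s) (pow_nonneg (hu₀.trans hu.1.le) _))⟩

end PowerSeries

noncomputable def growthRatio (p z : ℝ) : ℝ := (1 - (1 - p) / z)⁻¹

section GrowthRatio

variable {p : ℝ}

lemma growthRatio_one : growthRatio p 1 = p⁻¹ := by
  simp [growthRatio]

lemma growthRatio_mul_div_sub_one (hp1 : p < 1) {u : ℝ} (hu : 1 < u) :
    growthRatio p ((1 - p) * u / (u - 1)) = u := by
  rw [growthRatio, div_div_eq_mul_div, mul_div_mul_left _ _ (sub_ne_zero.2 hp1.ne'),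
    one_sub_div (zero_lt_one.trans hu).ne', sub_sub_cancel, one_div, inv_inv]

lemma le_one_sub_div (hp1 : p ≤ 1) {z : ℝ} (hz : 1 ≤ z) : p ≤ 1 - (1 - p) / z := by
  linarith [div_le_self (by linarith : 0 ≤ 1 - p) hz]

variable (hp : 0 < p) (hp1 : p ≤ 1)
include hp hp1

lemma one_le_growthRatio {z : ℝ} (hz : 1 ≤ z) : 1 ≤ growthRatio p z :=
  (one_le_inv₀ (hp.trans_le (le_one_sub_div hp1 hz))).2
    (sub_le_self _ (div_nonneg (by linarith) (by linarith)))

lemma growthRatio_antitoneOn : AntitoneOn (growthRatio p) (Set.Ici 1) := fun z hz w _ hzw =>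
  inv_anti₀ (hp.trans_le (le_one_sub_div hp1 hz))
    (sub_le_sub_left (div_le_div_of_nonneg_left (by linarith) (by linarith [hz.out]) hzw) 1)

lemma continuousOn_growthRatio : ContinuousOn (growthRatio p) (Set.Ici 1) :=
  (continuousOn_const.sub (continuousOn_const.div continuousOn_id fun _ hz =>
    (zero_lt_one.trans_le hz).ne')).inv₀ fun _ hz =>
      (hp.trans_le (le_one_sub_div hp1 hz)).ne'

end GrowthRatio

section FixedPoint

variable {a : ℕ → ℝ} (ha : ∀ s, 0 ≤ a s) {p : ℝ} (hp : 0 < p) (hp1 : p ≤ 1)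
include ha hp hp1

lemma mul_tsum_growthRatio_le_of_le {z w : ℝ} (hz : 1 ≤ z) (hzw : z ≤ w)
    (hs : Summable fun s => a s * growthRatio p z ^ (s + 1)) :
    p * ∑' s, a s * growthRatio p w ^ (s + 1) ≤ p * ∑' s, a s * growthRatio p z ^ (s + 1) :=
  mul_le_mul_of_nonneg_left (tsum_mul_pow_le_of_le ha
    (zero_le_one.trans (one_le_growthRatio hp hp1 (hz.trans hzw)))
    (growthRatio_antitoneOn hp hp1 hz (hz.trans hzw) hzw) hs) hp.le

lemma exists_le_mul_tsum_growthRatio (ha0 : 1 ≤ a 0) (h1 : Summable a)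
    (hopen : ∀ u, 1 ≤ u → (Summable fun s => a s * u ^ (s + 1)) →
      ∃ u' > u, Summable fun s => a s * u' ^ (s + 1)) :
    ∃ z, 1 ≤ z ∧ (Summable fun s => a s * growthRatio p z ^ (s + 1)) ∧
      z ≤ p * ∑' s, a s * growthRatio p z ^ (s + 1) := by
  have h1' : Summable fun s => a s * 1 ^ (s + 1) := by simpa using h1
  by_cases hinv : Summable fun s => a s * p⁻¹ ^ (s + 1)
  · refine ⟨1, le_rfl, by rwa [growthRatio_one], ?_⟩
    rw [growthRatio_one, ← mul_inv_cancel₀ hp.ne']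
    exact mul_le_mul_of_nonneg_left (le_tsum_mul_pow ha ha0 (by positivity) hinv) hp.le
  have hp1' : p < 1 := hp1.lt_of_ne fun h => hinv (by simpa [h] using h1')
  obtain ⟨u₀, hu₀, hs₀⟩ := hopen 1 le_rfl h1'
  set ζ : ℝ → ℝ := fun u => (1 - p) * u / (u - 1)
  obtain ⟨u, hu₀u, hup, hs, hlarge⟩ := exists_lt_tsum_mul_pow_of_not_summable ha
    (by linarith) (by positivity) hs₀ hinv (fun u hu => hopen u (by linarith)) (ζ u₀ / p)
  have hu : 1 < u := hu₀.trans_le hu₀u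
  have hζ : growthRatio p (ζ u) = u := growthRatio_mul_div_sub_one hp1' hu
  refine ⟨ζ u, ?_, by rwa [hζ], ?_⟩
  · have hpu : p * u < 1 := by simpa [hp.ne'] using mul_lt_mul_of_pos_left hup hp
    rw [le_div_iff₀ (by linarith)]
    nlinarith
  · rw [hζ]
    calc ζ u ≤ ζ u₀ := by
          rw [div_le_div_iff₀ (by linarith) (by linarith)]
          nlinarith
      _ ≤ p * ∑' s, a s * u ^ (s + 1) := by
          rw [div_lt_iff₀' hp] at hlarge
          exact hlarge.le

lemma exists_eq_mul_tsum_growthRatio_of_le {z₁ : ℝ} (hz₁ : 1 ≤ z₁)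
    (hs₁ : Summable fun s => a s * growthRatio p z₁ ^ (s + 1))
    (hle : z₁ ≤ p * ∑' s, a s * growthRatio p z₁ ^ (s + 1)) :
    ∃ z, 1 ≤ z ∧ (Summable fun s => a s * growthRatio p z ^ (s + 1)) ∧
      z = p * ∑' s, a s * growthRatio p z ^ (s + 1) := by
  set z₂ := p * ∑' s, a s * growthRatio p z₁ ^ (s + 1)
  have hmaps : Set.MapsTo (growthRatio p) (Set.Icc z₁ z₂) (Set.Icc 0 (growthRatio p z₁)) :=
    fun z hz => ⟨zero_le_one.trans (one_le_growthRatio hp hp1 (hz₁.trans hz.1)),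
      growthRatio_antitoneOn hp hp1 hz₁ (hz₁.trans hz.1) hz.1⟩
  have hcont : ContinuousOn (fun z => z - p * ∑' s, a s * growthRatio p z ^ (s + 1))
      (Set.Icc z₁ z₂) :=
    continuousOn_id.sub (continuousOn_const.mul ((continuousOn_tsum_mul_pow ha hs₁).comp
      ((continuousOn_growthRatio hp hp1).mono fun z hz => hz₁.trans hz.1) hmaps))
  obtain ⟨z, hz, hz0⟩ : (0 : ℝ) ∈ (fun z => z - p * ∑' s, a s * growthRatio p z ^ (s + 1)) ''
      Set.Icc z₁ z₂ := intermediate_value_Icc hle hcont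
    ⟨by simpa using hle, by simpa using mul_tsum_growthRatio_le_of_le ha hp hp1 hz₁ hle hs₁⟩
  exact ⟨z, hz₁.trans hz.1, summable_mul_pow_of_le ha (hmaps hz).1 (hmaps hz).2 hs₁,
    sub_eq_zero.1 hz0⟩

theorem existsUnique_eq_mul_tsum_growthRatio (ha0 : 1 ≤ a 0) (h1 : Summable a)
    (hopen : ∀ u, 1 ≤ u → (Summable fun s => a s * u ^ (s + 1)) →
      ∃ u' > u, Summable fun s => a s * u' ^ (s + 1)) :
    ∃! z, 1 ≤ z ∧ (Summable fun s => a s * growthRatio p z ^ (s + 1)) ∧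
      z = p * ∑' s, a s * growthRatio p z ^ (s + 1) := by
  obtain ⟨z₁, hz₁, hs₁, hle⟩ := exists_le_mul_tsum_growthRatio ha hp hp1 ha0 h1 hopen
  obtain ⟨z, hz, hzs, hzeq⟩ := exists_eq_mul_tsum_growthRatio_of_le ha hp hp1 hz₁ hs₁ hle
  refine ⟨z, ⟨hz, hzs, hzeq⟩, fun w ⟨hw, hws, hweq⟩ => ?_⟩
  rcases le_total w z with hwz | hzw
  · linarith [mul_tsum_growthRatio_le_of_le ha hp hp1 hw hwz hws]
  · linarith [mul_tsum_growthRatio_le_of_le ha hp hp1 hz hzw hzs]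

end FixedPoint

theorem exists_unique_fixed_point_infinite_horizon_general
    {χ : Type*} [Fintype χ] [DecidableEq χ]
    (K : χ → χ → ℝ) (hK0 : ∀ x y, 0 ≤ K x y)
    (μ : χ → ℝ) (hμ0 : ∀ x, 0 ≤ μ x) (hμ1 : ∑ x, μ x = 1)
    (hkill : ∀ x : χ, Filter.Tendsto
      (fun t => surv K (fun y => if y = x then (1 : ℝ) else 0) t) Filter.atTop (nhds 0))
    (p : ℝ) (hp : 0 < p) (hp1 : p ≤ 1) :
    ∃! z : ℝ, 1 ≤ z ∧
      Summable (fun s : ℕ => surv K μ s * ((1 - (1 - p) / z)⁻¹) ^ (s + 1)) ∧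
      z = p * ∑' s : ℕ, surv K μ s * ((1 - (1 - p) / z)⁻¹) ^ (s + 1) :=
  existsUnique_eq_mul_tsum_growthRatio (surv_nonneg_s1 hK0 hμ0) hp hp1
    ((surv_zero_s1 K μ).trans hμ1).ge (summable_surv hK0 hμ0 hkill)
    fun _ hu => exists_gt_summable_surv_mul_pow hK0 hμ0 (zero_lt_one.trans_le hu)

/-- Proposition 4.1 (case `T = ∞`): if the chain is killed almost surely from every
starting point (`P_x(τ_∂ > t) → 0` for every `x`), then for `p ∈ (0,1]` there is a
unique `z ∈ [1,∞)` such that the series `∑_{s=0}^{∞} P_μ(τ_∂ > s)·(1 − (1−p)/z)^{−(s+1)}`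
converges and `z` equals `p` times its sum. -/
theorem exists_unique_fixed_point_infinite_horizon
    {χ : Type*} [Fintype χ] [Nonempty χ] [DecidableEq χ]
    (K : χ → χ → ℝ) (hK0 : ∀ x y, 0 ≤ K x y) (hK1 : ∀ x, ∑ y, K x y ≤ 1)
    (μ : χ → ℝ) (hμ0 : ∀ x, 0 ≤ μ x) (hμ1 : ∑ x, μ x = 1)
    (hkill : ∀ x : χ, Filter.Tendsto
      (fun t => surv K (fun y => if y = x then (1 : ℝ) else 0) t) Filter.atTop (nhds 0))
    (p : ℝ) (hp : 0 < p) (hp1 : p ≤ 1) :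
    ∃! z : ℝ, 1 ≤ z ∧
      Summable (fun s : ℕ => surv K μ s * ((1 - (1 - p) / z)⁻¹) ^ (s + 1)) ∧
      z = p * ∑' s : ℕ, surv K μ s * ((1 - (1 - p) / z)⁻¹) ^ (s + 1) :=
  exists_unique_fixed_point_infinite_horizon_general K hK0 μ hμ0 hμ1 hkill p hp hp1
end

section
/- Assume P_x(τ_∂ < ∞) = 1 for every x ∈ χ, let λ₀ ∈ [0,1) be the spectral radius of the matrix K, and assume every state is accessible from μ, i.e. for every x ∈ χ there exists t ∈ ℕ with (μK^t)(x) > 0. Then: (i) for every k ≥ 0 with k·λ₀ < 1, k^t·P_μ(τ_∂ > t) → 0 as t → ∞; and (ii) if λ₀ > 0, then liminf_{t→∞} λ₀^{−t}·P_μ(τ_∂ > t) > 0 (and consequently liminf_{t→∞} k^t·P_μ(τ_∂ > t) > 0 for every k ≥ 1/λ₀). -/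
open Finset Filter

/-- `muK K μ t y = (μ K^t)(y)`, the sub-probability of being alive at `y` at time `t`. -/
noncomputable def muK {χ : Type*} [Fintype χ] [DecidableEq χ]
    (K : Matrix χ χ ℝ) (μ : χ → ℝ) (t : ℕ) (y : χ) : ℝ :=
  ∑ x, μ x * (K ^ t) x y

/-- The survival probability `P_μ(τ_∂ > t) = ∑_y (μ K^t)(y)`. -/
noncomputable def survM {χ : Type*} [Fintype χ] [DecidableEq χ]
    (K : Matrix χ χ ℝ) (μ : χ → ℝ) (t : ℕ) : ℝ :=
  ∑ y, muK K μ t y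

/-- `l` is the spectral radius of the real matrix `K`: the maximum modulus of its
complex eigenvalues. -/
def IsSpectralRadius {χ : Type*} [Fintype χ] [DecidableEq χ]
    (K : Matrix χ χ ℝ) (l : ℝ) : Prop :=
  (∀ z ∈ spectrum ℂ (K.map Complex.ofReal), ‖z‖ ≤ l) ∧
  (∃ z ∈ spectrum ℂ (K.map Complex.ofReal), ‖z‖ = l)

section MyAux

set_option linter.unusedSectionVars false

attribute [local instance] Matrix.linftyOpNormedRing Matrix.linftyOpNormedAlgebra

variable {χ : Type*} [Fintype χ] [Nonempty χ] [DecidableEq χ]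

/-- row sums of `K ^ t` -/
private noncomputable def rsumM (K : Matrix χ χ ℝ) (t : ℕ) (x : χ) : ℝ := ∑ y, (K ^ t) x y

private lemma powEntry_nonneg {K : Matrix χ χ ℝ} (hK0 : ∀ x y, 0 ≤ K x y) (t : ℕ) :
    ∀ x y, 0 ≤ (K ^ t) x y := by
  induction t with
  | zero =>
    intro x y
    rw [pow_zero]
    by_cases h : x = y <;> simp [Matrix.one_apply, h]
  | succ t ih =>
    intro x y
    rw [pow_succ, Matrix.mul_apply]
    exact Finset.sum_nonneg fun z _ => mul_nonneg (ih x z) (hK0 z y)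

private lemma rsumM_nonneg {K : Matrix χ χ ℝ} (hK0 : ∀ x y, 0 ≤ K x y) (t : ℕ) (x : χ) :
    0 ≤ rsumM K t x :=
  Finset.sum_nonneg fun y _ => powEntry_nonneg hK0 t x y

private lemma rsumM_anti {K : Matrix χ χ ℝ} (hK0 : ∀ x y, 0 ≤ K x y)
    (hK1 : ∀ x, ∑ y, K x y ≤ 1) (x : χ) : Antitone fun t => rsumM K t x := by
  apply antitone_nat_of_succ_le
  intro t
  calc ∑ y, (K ^ (t + 1)) x y = ∑ z, (K ^ t) x z * ∑ y, K z y := by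
        simp_rw [pow_succ, Matrix.mul_apply, Finset.mul_sum]
        exact Finset.sum_comm
    _ ≤ ∑ z, (K ^ t) x z * 1 :=
        Finset.sum_le_sum fun z _ =>
          mul_le_mul_of_nonneg_left (hK1 z) (powEntry_nonneg hK0 t x z)
    _ = rsumM K t x := by simp [rsumM]

private lemma norm_pow_eq (K : Matrix χ χ ℝ) (hK0 : ∀ x y, 0 ≤ K x y) (t : ℕ) :
    ∃ x : χ, ‖(K.map Complex.ofReal) ^ t‖ = rsumM K t x ∧
      ∀ x' : χ, rsumM K t x' ≤ ‖(K.map Complex.ofReal) ^ t‖ := by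
  have hmap : (K.map Complex.ofReal) ^ t = (K ^ t).map Complex.ofReal := by
    have : K.map Complex.ofReal = Complex.ofRealHom.mapMatrix K := rfl
    rw [this, ← map_pow]; rfl
  have hsum : ∀ x : χ, ((∑ y, ‖((K ^ t).map Complex.ofReal) x y‖₊ : NNReal) : ℝ)
      = rsumM K t x := by
    intro x
    push_cast
    unfold rsumM
    refine Finset.sum_congr rfl fun y _ => ?_
    rw [Matrix.map_apply, Complex.norm_real, Real.norm_eq_abs,
      abs_of_nonneg (powEntry_nonneg hK0 t x y)]
  obtain ⟨x, -, hx⟩ := Finset.exists_mem_eq_sup Finset.univ Finset.univ_nonempty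
    (fun i => ∑ j, ‖((K ^ t).map Complex.ofReal) i j‖₊)
  refine ⟨x, ?_, ?_⟩
  · rw [hmap, Matrix.linfty_opNorm_def, hx, hsum]
  · intro x'
    rw [hmap, Matrix.linfty_opNorm_def, ← hsum x']
    exact_mod_cast Finset.le_sup (f := fun i => ∑ j, ‖((K ^ t).map Complex.ofReal) i j‖₊)
      (Finset.mem_univ x')

private lemma muK_nonneg {K : Matrix χ χ ℝ} (hK0 : ∀ x y, 0 ≤ K x y) {μ : χ → ℝ}
    (hμ0 : ∀ x, 0 ≤ μ x) (t : ℕ) (y : χ) : 0 ≤ muK K μ t y :=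
  Finset.sum_nonneg fun x _ => mul_nonneg (hμ0 x) (powEntry_nonneg hK0 t x y)

private lemma muK_add (K : Matrix χ χ ℝ) (μ : χ → ℝ) (a b : ℕ) (y : χ) :
    muK K μ (a + b) y = ∑ z, muK K μ a z * (K ^ b) z y := by
  unfold muK
  simp_rw [pow_add, Matrix.mul_apply, Finset.mul_sum, Finset.sum_mul]
  rw [Finset.sum_comm]
  simp_rw [mul_assoc]

private lemma survM_eq (K : Matrix χ χ ℝ) (μ : χ → ℝ) (t : ℕ) :
    survM K μ t = ∑ x, μ x * rsumM K t x := by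
  unfold survM muK rsumM
  rw [Finset.sum_comm]
  simp_rw [← Finset.mul_sum]

private lemma survM_add (K : Matrix χ χ ℝ) (μ : χ → ℝ) (a b : ℕ) :
    survM K μ (a + b) = ∑ z, muK K μ a z * rsumM K b z := by
  unfold survM rsumM
  simp_rw [muK_add K μ a b]
  rw [Finset.sum_comm]
  simp_rw [← Finset.mul_sum]

theorem survival_decay_rate_aux
    (K : Matrix χ χ ℝ) (hK0 : ∀ x y, 0 ≤ K x y) (hK1 : ∀ x, ∑ y, K x y ≤ 1)
    (μ : χ → ℝ) (hμ0 : ∀ x, 0 ≤ μ x) (hμ1 : ∑ x, μ x = 1)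
    (lam : ℝ) (hlam0 : 0 ≤ lam) (hspec : IsSpectralRadius K lam)
    (hacc : ∀ x : χ, ∃ t : ℕ, 0 < muK K μ t x) :
    (∀ k : ℝ, 0 ≤ k → k * lam < 1 →
      Filter.Tendsto (fun t => k ^ t * survM K μ t) Filter.atTop (nhds 0)) ∧
    (0 < lam →
      (∃ ε > 0, ∀ᶠ t : ℕ in Filter.atTop, ε ≤ lam⁻¹ ^ t * survM K μ t) ∧
      (∀ k : ℝ, 1 / lam ≤ k →
        ∃ ε > 0, ∀ᶠ t : ℕ in Filter.atTop, ε ≤ k ^ t * survM K μ t)) := by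
  classical
  haveI : CompleteSpace (Matrix χ χ ℂ) := FiniteDimensional.complete ℂ _
  set Kc := K.map Complex.ofReal with hKcdef
  have hnorm := norm_pow_eq K hK0
  have hsurv0 : ∀ t, 0 ≤ survM K μ t :=
    fun t => Finset.sum_nonneg fun y _ => muK_nonneg hK0 hμ0 t y
  have hsurv_le : ∀ t, survM K μ t ≤ ‖Kc ^ t‖ := by
    intro t
    obtain ⟨x, hx, hle⟩ := hnorm t
    rw [survM_eq]
    calc ∑ x, μ x * rsumM K t x ≤ ∑ x, μ x * ‖Kc ^ t‖ :=
          Finset.sum_le_sum fun x _ => mul_le_mul_of_nonneg_left (hle x) (hμ0 x)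
      _ = ‖Kc ^ t‖ := by rw [← Finset.sum_mul, hμ1, one_mul]
  constructor
  · -- part (i)
    intro k hk0 hk1
    obtain ⟨r, hlr, hr0, hkr⟩ : ∃ r : ℝ, lam < r ∧ 0 < r ∧ k * r < 1 := by
      rcases eq_or_lt_of_le hk0 with h | h
      · exact ⟨lam + 1, by linarith, by linarith, by rw [← h]; norm_num⟩
      · refine ⟨(lam + 1 / k) / 2, ?_, by positivity, ?_⟩
        · have hlk : lam < 1 / k := by
            rw [lt_div_iff₀ h, mul_comm]; exact hk1
          linarith
        · have hkk : k * (1 / k) = 1 := by field_simp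
          nlinarith
    have hsr : spectralRadius ℂ Kc = ENNReal.ofReal lam := by
      apply le_antisymm
      · apply iSup₂_le
        intro z hz
        rw [ENNReal.ofReal, ENNReal.coe_le_coe, ← NNReal.coe_le_coe, coe_nnnorm,
          Real.coe_toNNReal _ hlam0]
        exact hspec.1 z hz
      · obtain ⟨z, hz, hzabs⟩ := hspec.2
        have h1 : ENNReal.ofReal lam = (‖z‖₊ : ENNReal) := by
          rw [ENNReal.ofReal, ENNReal.coe_inj]
          ext
          rw [coe_nnnorm, Real.coe_toNNReal _ hlam0, hzabs]
        rw [h1]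
        exact le_iSup₂ (f := fun z (_ : z ∈ spectrum ℂ Kc) => (‖z‖₊ : ENNReal)) z hz
    have hG := spectrum.pow_nnnorm_pow_one_div_tendsto_nhds_spectralRadius Kc
    rw [hsr] at hG
    have hlt : ENNReal.ofReal lam < ENNReal.ofReal r :=
      (ENNReal.ofReal_lt_ofReal_iff hr0).mpr hlr
    have hev : ∀ᶠ t : ℕ in atTop, (‖Kc ^ t‖₊ : ENNReal) ^ (1 / (t : ℝ)) < ENNReal.ofReal r :=
      hG.eventually_lt_const hlt
    have hev2 : ∀ᶠ t : ℕ in atTop, ‖Kc ^ t‖ ≤ r ^ t := by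
      filter_upwards [hev, eventually_ge_atTop 1] with t ht ht1
      have htne : (t : ℝ) ≠ 0 := Nat.cast_ne_zero.mpr (by omega)
      have h1 : ((‖Kc ^ t‖₊ : ENNReal) ^ (1 / (t : ℝ))) ^ (t : ℝ)
          ≤ (ENNReal.ofReal r) ^ (t : ℝ) :=
        ENNReal.rpow_le_rpow ht.le (by positivity)
      rw [← ENNReal.rpow_mul, one_div, inv_mul_cancel₀ htne, ENNReal.rpow_one,
        ENNReal.ofReal_rpow_of_pos hr0, Real.rpow_natCast,
        ← enorm_eq_nnnorm, ← ofReal_norm] at h1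
      exact (ENNReal.ofReal_le_ofReal_iff (by positivity)).mp h1
    apply squeeze_zero' (g := fun t => (k * r) ^ t)
      (Eventually.of_forall fun t => mul_nonneg (pow_nonneg hk0 t) (hsurv0 t))
    · filter_upwards [hev2] with t ht
      calc k ^ t * survM K μ t ≤ k ^ t * (r ^ t) := by
            exact mul_le_mul_of_nonneg_left ((hsurv_le t).trans ht) (pow_nonneg hk0 t)
        _ = (k * r) ^ t := (mul_pow k r t).symm
    · exact tendsto_pow_atTop_nhds_zero_of_lt_one (by positivity) hkr
  · -- part (ii)
    intro hlam
    obtain ⟨z, hz, hzabs⟩ := hspec.2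
    have hpow : ∀ t : ℕ, lam ^ t ≤ ‖Kc ^ t‖ := by
      intro t
      have hzt : z ^ t ∈ spectrum ℂ (Kc ^ t) :=
        spectrum.pow_image_subset (𝕜 := ℂ) Kc t ⟨z, hz, rfl⟩
      have h := spectrum.norm_le_norm_of_mem hzt
      rwa [norm_pow, hzabs] at h
    choose s hs using hacc
    set S := Finset.univ.sup s with hSdef
    set c := Finset.univ.inf' Finset.univ_nonempty (fun x => muK K μ (s x) x) with hcdef
    obtain ⟨x₀, -, hc⟩ := Finset.exists_mem_eq_inf' Finset.univ_nonempty
      (fun x => muK K μ (s x) x)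
    have hc0 : 0 < c := by rw [hcdef, hc]; exact hs x₀
    have key : ∀ T, S ≤ T → c * lam ^ T ≤ survM K μ T := by
      intro T hT
      obtain ⟨x, hx, -⟩ := hnorm T
      have h1 : lam ^ T ≤ rsumM K T x := by rw [← hx]; exact hpow T
      have hsx : s x ≤ T := le_trans (Finset.le_sup (Finset.mem_univ x)) hT
      have h2 : survM K μ T = ∑ z, muK K μ (s x) z * rsumM K (T - s x) z := by
        rw [← survM_add]
        congr 1
        omega
      rw [h2]
      have h4 : rsumM K T x ≤ rsumM K (T - s x) x := rsumM_anti hK0 hK1 x (by omega)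
      have h5 : c ≤ muK K μ (s x) x := Finset.inf'_le _ (Finset.mem_univ x)
      have h3 : c * lam ^ T ≤ muK K μ (s x) x * rsumM K (T - s x) x :=
        mul_le_mul h5 (h1.trans h4) (by positivity) (muK_nonneg hK0 hμ0 _ _)
      exact h3.trans (Finset.single_le_sum
        (f := fun z => muK K μ (s x) z * rsumM K (T - s x) z)
        (fun z _ => mul_nonneg (muK_nonneg hK0 hμ0 _ _) (rsumM_nonneg hK0 _ _))
        (Finset.mem_univ x))
    have hmain : ∀ T, S ≤ T → c ≤ lam⁻¹ ^ T * survM K μ T := by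
      intro T hT
      have h := key T hT
      calc c = lam⁻¹ ^ T * (c * lam ^ T) := by
            rw [← mul_assoc, mul_comm (lam⁻¹ ^ T) c, mul_assoc, ← mul_pow,
              inv_mul_cancel₀ hlam.ne', one_pow, mul_one]
        _ ≤ lam⁻¹ ^ T * survM K μ T :=
            mul_le_mul_of_nonneg_left h (by positivity)
    constructor
    · exact ⟨c, hc0, by filter_upwards [eventually_ge_atTop S] with T hT using hmain T hT⟩
    · intro k hk
      refine ⟨c, hc0, ?_⟩
      filter_upwards [eventually_ge_atTop S] with T hT
      have hik : lam⁻¹ ≤ k := by rwa [← one_div]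
      have h1 : lam⁻¹ ^ T ≤ k ^ T := pow_le_pow_left₀ (by positivity) hik T
      calc c ≤ lam⁻¹ ^ T * survM K μ T := hmain T hT
        _ ≤ k ^ T * survM K μ T := mul_le_mul_of_nonneg_right h1 (hsurv0 T)

end MyAux

/-- Equation (4.4) of the paper: if killing is a.s. from every state, `λ₀ ∈ [0,1)` is the
spectral radius of `K`, and every state is accessible from `μ`, then
(i) `k^t·P_μ(τ_∂ > t) → 0` whenever `k ≥ 0` and `k·λ₀ < 1`, and
(ii) if `λ₀ > 0` then `liminf_t λ₀^{−t}·P_μ(τ_∂ > t) > 0`, hence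
`liminf_t k^t·P_μ(τ_∂ > t) > 0` for every `k ≥ 1/λ₀`. -/
theorem survival_decay_rate
    {χ : Type*} [Fintype χ] [Nonempty χ] [DecidableEq χ]
    (K : Matrix χ χ ℝ) (hK0 : ∀ x y, 0 ≤ K x y) (hK1 : ∀ x, ∑ y, K x y ≤ 1)
    (μ : χ → ℝ) (hμ0 : ∀ x, 0 ≤ μ x) (hμ1 : ∑ x, μ x = 1)
    (hkill : ∀ x : χ, Filter.Tendsto (fun t => ∑ y, (K ^ t) x y) Filter.atTop (nhds 0))
    (lam : ℝ) (hlam0 : 0 ≤ lam) (hlam1 : lam < 1) (hspec : IsSpectralRadius K lam)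
    (hacc : ∀ x : χ, ∃ t : ℕ, 0 < muK K μ t x) :
    (∀ k : ℝ, 0 ≤ k → k * lam < 1 →
      Filter.Tendsto (fun t => k ^ t * survM K μ t) Filter.atTop (nhds 0)) ∧
    (0 < lam →
      (∃ ε > 0, ∀ᶠ t : ℕ in Filter.atTop, ε ≤ lam⁻¹ ^ t * survM K μ t) ∧
      (∀ k : ℝ, 1 / lam ≤ k →
        ∃ ε > 0, ∀ᶠ t : ℕ in Filter.atTop, ε ≤ k ^ t * survM K μ t)) := by
  exact survival_decay_rate_aux K hK0 hK1 μ hμ0 hμ1 lam hlam0 hspec hacc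
end

section
/- Assume P_x(τ_∂ < ∞) = 1 for every x ∈ χ, let λ₀ ∈ (0,1) be the spectral radius of K, assume every state is accessible from μ, let p ∈ (0,1], and suppose z₀ := (1−p)/(1−λ₀) ≥ 1. Then for every z > z₀ the series Σ_{s=0}^{∞} P_μ(τ_∂ > s)·(1 − (1−p)/z)^{−(s+1)} converges, and the function f_∞(z) := z − p·Σ_{s=0}^{∞} P_μ(τ_∂ > s)·(1 − (1−p)/z)^{−(s+1)} satisfies f_∞(z) → −∞ as z ↓ z₀. -/
open Finset Filter
open scoped ENNReal NNReal

section auxGelfand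
attribute [local instance] Matrix.linftyOpNormedRing Matrix.linftyOpNormedAlgebra

/-- Entries of powers of a nonneg matrix are nonneg. -/
theorem pow_entry_nonneg {χ : Type*} [Fintype χ] [DecidableEq χ]
    (K : Matrix χ χ ℝ) (hK0 : ∀ x y, 0 ≤ K x y) (s : ℕ) :
    ∀ x y, 0 ≤ (K ^ s) x y := by
  induction s with
  | zero => intro x y; rw [pow_zero, Matrix.one_apply]; split <;> norm_num
  | succ n ih =>
    intro x y
    rw [pow_succ, Matrix.mul_apply]
    exact Finset.sum_nonneg fun w _ => mul_nonneg (ih x w) (hK0 w y)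

/-- Via Gelfand's formula, row sums of powers are eventually bounded by `q ^ s`
for any `q` above the spectral radius. -/
theorem gelfand_row_bound {χ : Type*} [Fintype χ] [Nonempty χ] [DecidableEq χ]
    (K : Matrix χ χ ℝ) (hK0 : ∀ x y, 0 ≤ K x y)
    (lam q : ℝ) (hlam0 : 0 ≤ lam) (hspec : IsSpectralRadius K lam) (hq : lam < q) :
    ∀ᶠ s : ℕ in atTop, ∀ x, ∑ y, (K ^ s) x y ≤ q ^ s := by
  set A : Matrix χ χ ℂ := K.map Complex.ofReal with hA
  have hq0 : 0 < q := lt_of_le_of_lt hlam0 hq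
  have hrad : spectralRadius ℂ A = ENNReal.ofReal lam := by
    apply le_antisymm
    · apply iSup₂_le
      intro z hz
      have h1 : ‖z‖ ≤ lam := hspec.1 z hz
      have : (‖z‖₊ : ℝ≥0∞) = ENNReal.ofReal ‖z‖ := by
        rw [ENNReal.ofReal, norm_toNNReal]
      rw [this]
      exact ENNReal.ofReal_le_ofReal h1
    · obtain ⟨z, hz, habs⟩ := hspec.2
      have : ENNReal.ofReal lam = (‖z‖₊ : ℝ≥0∞) := by
        rw [← habs, ENNReal.ofReal, norm_toNNReal]
      rw [this]
      exact le_iSup₂ (f := fun z _ => (‖z‖₊ : ℝ≥0∞)) z hz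
  have hgel := spectrum.pow_nnnorm_pow_one_div_tendsto_nhds_spectralRadius A
  rw [hrad] at hgel
  have hlt : ENNReal.ofReal lam < ENNReal.ofReal q := by
    exact ENNReal.ofReal_lt_ofReal_iff hq0 |>.mpr hq
  have hev := hgel.eventually_lt_const hlt
  rw [eventually_atTop] at hev ⊢
  obtain ⟨N, hN⟩ := hev
  refine ⟨max N 1, fun s hs x => ?_⟩
  have hs1 : 1 ≤ s := le_trans (le_max_right N 1) hs
  have hsN : N ≤ s := le_trans (le_max_left N 1) hs
  have hnorm : (‖A ^ s‖₊ : ℝ≥0∞) ≤ ENNReal.ofReal q ^ s := by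
    have h := (hN s hsN).le
    calc (‖A ^ s‖₊ : ℝ≥0∞) = ((‖A ^ s‖₊ : ℝ≥0∞) ^ (1 / (s:ℝ))) ^ (s : ℝ) := by
          rw [← ENNReal.rpow_mul, one_div,
            inv_mul_cancel₀ (by exact_mod_cast Nat.one_le_iff_ne_zero.mp hs1 : (s:ℝ) ≠ 0),
            ENNReal.rpow_one]
      _ ≤ (ENNReal.ofReal q) ^ (s : ℝ) := ENNReal.rpow_le_rpow h (by positivity)
      _ = ENNReal.ofReal q ^ s := ENNReal.rpow_natCast _ s
  have hAs : A ^ s = (K ^ s).map Complex.ofReal := by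
    rw [hA]
    have : K.map Complex.ofReal = Complex.ofRealHom.mapMatrix K := rfl
    rw [this, ← map_pow]
    rfl
  have hKs0 : ∀ x y, 0 ≤ (K ^ s) x y := pow_entry_nonneg K hK0 s
  have hrow : ∑ y, (K ^ s) x y ≤ ‖A ^ s‖ := by
    have h1 : (∑ y, ‖(A ^ s) x y‖₊) ≤ ‖A ^ s‖₊ := by
      rw [Matrix.linfty_opNNNorm_def]
      exact Finset.le_sup (f := fun i => ∑ j, ‖(A ^ s) i j‖₊) (Finset.mem_univ x)
    have h2 : ∑ y, (K ^ s) x y = ((∑ y, ‖(A ^ s) x y‖₊ : ℝ≥0) : ℝ) := by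
      push_cast
      apply Finset.sum_congr rfl
      intro y _
      rw [hAs]
      simp [Matrix.map_apply, Complex.norm_real, Real.norm_eq_abs,
        abs_of_nonneg (hKs0 x y)]
    rw [h2]
    exact_mod_cast h1
  refine le_trans hrow ?_
  have : ‖A ^ s‖₊ ≤ q.toNNReal ^ s := by
    have := hnorm
    rw [ENNReal.ofReal] at this
    exact_mod_cast this
  calc ‖A ^ s‖ = ((‖A ^ s‖₊ : ℝ≥0) : ℝ) := rfl
    _ ≤ ((q.toNNReal ^ s : ℝ≥0) : ℝ) := by exact_mod_cast this
    _ = q ^ s := by push_cast [Real.coe_toNNReal q hq0.le]; ring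

end auxGelfand

/-- A nonnegative sub-eigenvector for the spectral radius, obtained as the entrywise
modulus of a complex eigenvector of an eigenvalue of maximal modulus. -/
theorem exists_subinvariant {χ : Type*} [Fintype χ] [DecidableEq χ]
    (K : Matrix χ χ ℝ) (hK0 : ∀ x y, 0 ≤ K x y)
    (lam : ℝ) (hspec : IsSpectralRadius K lam) :
    ∃ u : χ → ℝ, (∀ x, 0 ≤ u x) ∧ (∃ x, 0 < u x) ∧
      ∀ x, lam * u x ≤ ∑ y, K x y * u y := by
  obtain ⟨z, hz, habs⟩ := hspec.2
  set A : Matrix χ χ ℂ := K.map Complex.ofReal with hA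
  have hnu : ¬IsUnit ((algebraMap ℂ (Matrix χ χ ℂ)) z - A) := spectrum.mem_iff.mp hz
  have hdet : ((algebraMap ℂ (Matrix χ χ ℂ)) z - A).det = 0 := by
    by_contra h
    exact hnu ((Matrix.isUnit_iff_isUnit_det _).mpr (isUnit_iff_ne_zero.mpr h))
  obtain ⟨v, hv0, hveq⟩ := Matrix.exists_mulVec_eq_zero_iff.mpr hdet
  have hAv : A.mulVec v = z • v := by
    rw [Matrix.sub_mulVec] at hveq
    have h1 : ((algebraMap ℂ (Matrix χ χ ℂ)) z).mulVec v = z • v := by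
      rw [Algebra.algebraMap_eq_smul_one, Matrix.smul_mulVec, Matrix.one_mulVec]
    rw [h1, sub_eq_zero] at hveq
    exact hveq.symm
  refine ⟨fun x => ‖v x‖, fun x => norm_nonneg _, ?_, ?_⟩
  · obtain ⟨x, hx⟩ := Function.ne_iff.mp hv0
    exact ⟨x, by simpa using norm_pos_iff.mpr hx⟩
  · intro x
    have h1 : (A.mulVec v) x = ∑ y, (K x y : ℂ) * v y := by
      simp [Matrix.mulVec, dotProduct, hA, Matrix.map_apply]
    have h2 : lam * ‖v x‖ = ‖∑ y, (K x y : ℂ) * v y‖ := by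
      rw [← h1, hAv]
      simp [← habs, norm_mul]
    rw [h2]
    refine le_trans (norm_sum_le _ _) ?_
    apply le_of_eq
    apply Finset.sum_congr rfl
    intro y _
    rw [norm_mul, Complex.norm_real, Real.norm_eq_abs, abs_of_nonneg (hK0 x y)]

/-- If `z₀ := (1−p)/(1−λ₀) ≥ 1`, then for `z > z₀` the series
`∑_{s=0}^{∞} P_μ(τ_∂ > s)·(1 − (1−p)/z)^{−(s+1)}` converges, and
`f_∞(z) := z − p·∑_{s=0}^{∞} P_μ(τ_∂ > s)·(1 − (1−p)/z)^{−(s+1)} → −∞` as `z ↓ z₀`. -/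
theorem f_infty_tendsto_atBot
    {χ : Type*} [Fintype χ] [Nonempty χ] [DecidableEq χ]
    (K : Matrix χ χ ℝ) (hK0 : ∀ x y, 0 ≤ K x y) (hK1 : ∀ x, ∑ y, K x y ≤ 1)
    (μ : χ → ℝ) (hμ0 : ∀ x, 0 ≤ μ x) (hμ1 : ∑ x, μ x = 1)
    (hkill : ∀ x : χ, Filter.Tendsto (fun t => ∑ y, (K ^ t) x y) Filter.atTop (nhds 0))
    (lam : ℝ) (hlam0 : 0 < lam) (hlam1 : lam < 1) (hspec : IsSpectralRadius K lam)
    (hacc : ∀ x : χ, ∃ t : ℕ, 0 < muK K μ t x)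
    (p : ℝ) (hp : 0 < p) (hp1 : p ≤ 1)
    (z₀ : ℝ) (hz₀def : z₀ = (1 - p) / (1 - lam)) (hz₀ : 1 ≤ z₀) :
    (∀ z : ℝ, z₀ < z →
      Summable (fun s : ℕ => survM K μ s * ((1 - (1 - p) / z)⁻¹) ^ (s + 1))) ∧
    Filter.Tendsto
      (fun z : ℝ => z - p * ∑' s : ℕ, survM K μ s * ((1 - (1 - p) / z)⁻¹) ^ (s + 1))
      (nhdsWithin z₀ (Set.Ioi z₀)) Filter.atBot := by
  classical
  have h1lam : 0 < 1 - lam := by linarith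
  have hz₀pos : 0 < z₀ := by linarith
  have hzeq : z₀ * (1 - lam) = 1 - p := by
    rw [hz₀def]; field_simp
  have h1p : 0 < 1 - p := by nlinarith
  have hw0 : 1 - (1 - p) / z₀ = lam := by
    rw [← hzeq]; field_simp; ring
  -- basic nonnegativity
  have hKs0 : ∀ s x y, 0 ≤ (K ^ s) x y := fun s => pow_entry_nonneg K hK0 s
  have hmuK0 : ∀ n x, 0 ≤ muK K μ n x := fun n x =>
    Finset.sum_nonneg fun w _ => mul_nonneg (hμ0 w) (hKs0 n w x)
  have hsurv0 : ∀ s, 0 ≤ survM K μ s := fun s =>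
    Finset.sum_nonneg fun y _ => hmuK0 s y
  -- sub-invariant vector
  obtain ⟨u, hu0, ⟨x₀, hux₀⟩, hKu⟩ := exists_subinvariant K hK0 lam hspec
  have hKsu : ∀ s x, lam ^ s * u x ≤ ∑ y, (K ^ s) x y * u y := by
    intro s
    induction s with
    | zero => intro x; simp [Matrix.one_apply]
    | succ n ih =>
      intro x
      have key : ∑ y, (K ^ (n+1)) x y * u y = ∑ w, K x w * ∑ y, (K ^ n) w y * u y := by
        rw [pow_succ']
        simp only [Matrix.mul_apply, Finset.sum_mul, Finset.mul_sum]
        rw [Finset.sum_comm]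
        exact Finset.sum_congr rfl fun w _ => Finset.sum_congr rfl fun y _ => by ring
      rw [key]
      have h1 : ∑ w, K x w * (lam ^ n * u w) ≤ ∑ w, K x w * ∑ y, (K ^ n) w y * u y :=
        Finset.sum_le_sum fun w _ => mul_le_mul_of_nonneg_left (ih w) (hK0 x w)
      have h2 : lam ^ (n+1) * u x ≤ ∑ w, K x w * (lam ^ n * u w) := by
        have h3 : ∑ w, K x w * (lam ^ n * u w) = lam ^ n * ∑ w, K x w * u w := by
          rw [Finset.mul_sum]; exact Finset.sum_congr rfl fun w _ => by ring
        rw [h3, pow_succ]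
        calc lam ^ n * lam * u x = lam ^ n * (lam * u x) := by ring
          _ ≤ lam ^ n * ∑ w, K x w * u w :=
            mul_le_mul_of_nonneg_left (hKu x) (pow_nonneg hlam0.le n)
      exact le_trans h2 h1
  set M : ℝ := ∑ y, u y with hM
  have huM : ∀ y, u y ≤ M := fun y =>
    Finset.single_le_sum (fun w _ => hu0 w) (Finset.mem_univ y)
  have hM0 : 0 < M := lt_of_lt_of_le hux₀ (huM x₀)
  have hrow_low : ∀ s x, lam ^ s * u x / M ≤ ∑ y, (K ^ s) x y := by
    intro s x
    have h1 : ∑ y, (K ^ s) x y * (u y / M) ≤ ∑ y, (K ^ s) x y := by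
      refine Finset.sum_le_sum fun y _ => ?_
      calc (K ^ s) x y * (u y / M) ≤ (K ^ s) x y * 1 := by
            refine mul_le_mul_of_nonneg_left ?_ (hKs0 s x y)
            rw [div_le_one hM0]; exact huM y
        _ = (K ^ s) x y := mul_one _
    have h2 : lam ^ s * u x / M ≤ ∑ y, (K ^ s) x y * (u y / M) := by
      have h3 : ∑ y, (K ^ s) x y * (u y / M) = (∑ y, (K ^ s) x y * u y) / M := by
        rw [Finset.sum_div]; exact Finset.sum_congr rfl fun y _ => by ring
      rw [h3]
      gcongr
      exact hKsu s x
    exact le_trans h2 h1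
  obtain ⟨t, ht⟩ := hacc x₀
  set c : ℝ := muK K μ t x₀ * (u x₀ / M) with hc
  have hc0 : 0 < c := mul_pos ht (div_pos hux₀ hM0)
  -- survM decomposition
  have hmuK_vec : ∀ n, muK K μ n = Matrix.vecMul μ (K ^ n) := by
    intro n; funext y; simp [muK, Matrix.vecMul, dotProduct]
  have hsurv_add : ∀ s, survM K μ (t + s) = ∑ w, muK K μ t w * ∑ y, (K ^ s) w y := by
    intro s
    have hmm : muK K μ (t + s) = Matrix.vecMul (muK K μ t) (K ^ s) := by
      rw [hmuK_vec, hmuK_vec, Matrix.vecMul_vecMul, ← pow_add]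
    calc survM K μ (t + s) = ∑ y, ∑ w, muK K μ t w * (K ^ s) w y := by
          unfold survM
          rw [hmm]
          exact Finset.sum_congr rfl fun y _ => rfl
      _ = ∑ w, ∑ y, muK K μ t w * (K ^ s) w y := Finset.sum_comm
      _ = ∑ w, muK K μ t w * ∑ y, (K ^ s) w y := by
          exact Finset.sum_congr rfl fun w _ => (Finset.mul_sum _ _ _).symm
  have hsurv_low : ∀ s, c * lam ^ s ≤ survM K μ (t + s) := by
    intro s
    rw [hsurv_add s]
    have h1 : muK K μ t x₀ * (lam ^ s * u x₀ / M) ≤ muK K μ t x₀ * ∑ y, (K ^ s) x₀ y :=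
      mul_le_mul_of_nonneg_left (hrow_low s x₀) ht.le
    have h2 : muK K μ t x₀ * ∑ y, (K ^ s) x₀ y ≤ ∑ w, muK K μ t w * ∑ y, (K ^ s) w y :=
      Finset.single_le_sum
        (fun w _ => mul_nonneg (hmuK0 t w)
          (Finset.sum_nonneg fun y _ => hKs0 s w y)) (Finset.mem_univ x₀)
    calc c * lam ^ s = muK K μ t x₀ * (lam ^ s * u x₀ / M) := by rw [hc]; ring
      _ ≤ _ := le_trans h1 h2
  -- survM upper bound
  have hsurv_up : ∀ q : ℝ, lam < q → ∀ᶠ s in atTop, survM K μ s ≤ q ^ s := by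
    intro q hq
    filter_upwards [gelfand_row_bound K hK0 lam q hlam0.le hspec hq] with s hs
    calc survM K μ s = ∑ x, μ x * ∑ y, (K ^ s) x y := by
          unfold survM muK
          rw [Finset.sum_comm]
          exact Finset.sum_congr rfl fun x _ => (Finset.mul_sum _ _ _).symm
      _ ≤ ∑ x, μ x * q ^ s := Finset.sum_le_sum fun x _ =>
          mul_le_mul_of_nonneg_left (hs x) (hμ0 x)
      _ = q ^ s := by rw [← Finset.sum_mul, hμ1, one_mul]
  -- pointwise facts for z > z₀
  have hwfact : ∀ z : ℝ, z₀ < z → lam < 1 - (1 - p) / z ∧ 1 - (1 - p) / z ≤ 1 := by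
    intro z hz
    have hzpos : 0 < z := lt_trans hz₀pos hz
    have hdiv : (1 - p) / z < (1 - p) / z₀ := div_lt_div_of_pos_left h1p hz₀pos hz
    have hdiv0 : 0 ≤ (1 - p) / z := div_nonneg h1p.le hzpos.le
    constructor
    · have : (1 - p) / z₀ = 1 - lam := by linarith [hw0]
      linarith
    · linarith
  have hrfact : ∀ z : ℝ, z₀ < z → 0 < (1 - (1 - p) / z)⁻¹ ∧ 1 ≤ (1 - (1 - p) / z)⁻¹ ∧
      lam * (1 - (1 - p) / z)⁻¹ < 1 := by
    intro z hz
    obtain ⟨hw1, hw2⟩ := hwfact z hz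
    have hwpos : 0 < 1 - (1 - p) / z := lt_trans hlam0 hw1
    refine ⟨inv_pos.mpr hwpos, (one_le_inv₀ hwpos).mpr hw2, ?_⟩
    calc lam * (1 - (1 - p) / z)⁻¹ < (1 - (1 - p) / z) * (1 - (1 - p) / z)⁻¹ := by
          exact mul_lt_mul_of_pos_right hw1 (inv_pos.mpr hwpos)
      _ = 1 := mul_inv_cancel₀ (ne_of_gt hwpos)
  -- summability
  have hsummable : ∀ z : ℝ, z₀ < z →
      Summable (fun s : ℕ => survM K μ s * ((1 - (1 - p) / z)⁻¹) ^ (s + 1)) := by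
    intro z hz
    obtain ⟨hw1, hw2⟩ := hwfact z hz
    obtain ⟨hr0, hr1, hlamr⟩ := hrfact z hz
    have hwpos : (0:ℝ) < 1 - (1 - p) / z := lt_trans hlam0 hw1
    obtain ⟨q, hq1, hq2⟩ : ∃ q : ℝ, lam < q ∧ q < 1 - (1 - p) / z :=
      ⟨(lam + (1 - (1 - p) / z)) / 2, by linarith, by linarith⟩
    have hq0 : 0 < q := lt_trans hlam0 hq1
    have hqr : q * (1 - (1 - p) / z)⁻¹ < 1 := by
      calc q * (1 - (1 - p) / z)⁻¹ < (1 - (1 - p) / z) * (1 - (1 - p) / z)⁻¹ :=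
            mul_lt_mul_of_pos_right hq2 hr0
        _ = 1 := mul_inv_cancel₀ (ne_of_gt hwpos)
    have hqr0 : 0 ≤ q * (1 - (1 - p) / z)⁻¹ := mul_nonneg hq0.le hr0.le
    obtain ⟨N, hN⟩ := eventually_atTop.mp (hsurv_up q hq1)
    rw [← summable_nat_add_iff N]
    refine Summable.of_nonneg_of_le (f := fun s : ℕ =>
      (1 - (1 - p) / z)⁻¹ * (q * (1 - (1 - p) / z)⁻¹) ^ s) ?_ ?_ ?_
    · intro s
      exact mul_nonneg (hsurv0 _) (pow_nonneg hr0.le _)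
    · intro s
      calc survM K μ (s + N) * ((1 - (1 - p) / z)⁻¹) ^ (s + N + 1)
          ≤ q ^ (s + N) * ((1 - (1 - p) / z)⁻¹) ^ (s + N + 1) := by
            exact mul_le_mul_of_nonneg_right (hN (s + N) (Nat.le_add_left N s))
              (pow_nonneg hr0.le _)
        _ = (q * (1 - (1 - p) / z)⁻¹) ^ (s + N) * (1 - (1 - p) / z)⁻¹ := by
            rw [mul_pow, pow_succ]; ring
        _ ≤ (q * (1 - (1 - p) / z)⁻¹) ^ s * (1 - (1 - p) / z)⁻¹ := by
            refine mul_le_mul_of_nonneg_right ?_ hr0.le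
            exact pow_le_pow_of_le_one hqr0 hqr.le (Nat.le_add_right s N)
        _ = (1 - (1 - p) / z)⁻¹ * (q * (1 - (1 - p) / z)⁻¹) ^ s := mul_comm _ _
    · exact (summable_geometric_of_lt_one hqr0 hqr).mul_left _
  refine ⟨hsummable, ?_⟩
  -- lower bound for the tsum
  have htsum_low : ∀ z : ℝ, z₀ < z →
      c * (1 - lam * (1 - (1 - p) / z)⁻¹)⁻¹ ≤
        ∑' s : ℕ, survM K μ s * ((1 - (1 - p) / z)⁻¹) ^ (s + 1) := by
    intro z hz
    obtain ⟨hr0, hr1, hlamr⟩ := hrfact z hz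
    set r : ℝ := (1 - (1 - p) / z)⁻¹ with hrdef
    have hlr0 : 0 ≤ lam * r := by positivity
    have h1mr : 0 < 1 - lam * r := by linarith
    have hgeo : Summable (fun s : ℕ => c * r ^ (t + 1) * (lam * r) ^ s) :=
      (summable_geometric_of_lt_one hlr0 hlamr).mul_left _
    have h1 : ∑' s : ℕ, c * r ^ (t + 1) * (lam * r) ^ s
        = c * r ^ (t + 1) * (1 - lam * r)⁻¹ := by
      rw [tsum_mul_left, tsum_geometric_of_lt_one hlr0 hlamr]
    have h2 : ∑' s : ℕ, c * r ^ (t + 1) * (lam * r) ^ s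
        ≤ ∑' s : ℕ, survM K μ s * r ^ (s + 1) := by
      apply Summable.tsum_le_tsum_of_inj (fun s => t + s) (add_right_injective t)
      · intro s _
        exact mul_nonneg (hsurv0 s) (pow_nonneg hr0.le _)
      · intro s
        have he : c * r ^ (t + 1) * (lam * r) ^ s = (c * lam ^ s) * r ^ (t + s + 1) := by
          rw [mul_pow, show t + s + 1 = (t + 1) + s from by ring, pow_add]
          ring
        rw [he]
        exact mul_le_mul_of_nonneg_right (hsurv_low s) (pow_nonneg hr0.le _)
      · exact hgeo
      · exact hsummable z hz
    have h3 : c * (1 - lam * r)⁻¹ ≤ c * r ^ (t + 1) * (1 - lam * r)⁻¹ := by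
      have h4 : (1:ℝ) ≤ r ^ (t + 1) := by
        calc (1:ℝ) = 1 ^ (t + 1) := (one_pow _).symm
          _ ≤ r ^ (t + 1) := pow_le_pow_left₀ (by norm_num) hr1 (t + 1)
      have h5 : c * 1 ≤ c * r ^ (t + 1) := mul_le_mul_of_nonneg_left h4 hc0.le
      have := mul_le_mul_of_nonneg_right h5 (inv_nonneg.mpr h1mr.le)
      simpa using this
    calc c * (1 - lam * r)⁻¹ ≤ c * r ^ (t + 1) * (1 - lam * r)⁻¹ := h3
      _ = ∑' s : ℕ, c * r ^ (t + 1) * (lam * r) ^ s := h1.symm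
      _ ≤ _ := h2
  -- the tendsto part
  set F := nhdsWithin z₀ (Set.Ioi z₀) with hF
  have hden : Tendsto (fun z : ℝ => 1 - lam * (1 - (1 - p) / z)⁻¹) F
      (nhdsWithin 0 (Set.Ioi 0)) := by
    rw [tendsto_nhdsWithin_iff]
    constructor
    · have hcont : ContinuousAt (fun z : ℝ => 1 - lam * (1 - (1 - p) / z)⁻¹) z₀ := by
        apply ContinuousAt.sub continuousAt_const
        apply ContinuousAt.mul continuousAt_const
        apply ContinuousAt.inv₀
        · exact ContinuousAt.sub continuousAt_const
            (ContinuousAt.div continuousAt_const continuousAt_id (ne_of_gt hz₀pos))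
        · rw [hw0]; exact ne_of_gt hlam0
      have h := hcont.tendsto.mono_left (nhdsWithin_le_nhds : F ≤ nhds z₀)
      have hval : nhds ((fun z : ℝ => 1 - lam * (1 - (1 - p) / z)⁻¹) z₀) = nhds (0:ℝ) := by
        norm_num [hw0, mul_inv_cancel₀ (ne_of_gt hlam0)]
      rwa [hval] at h
    · filter_upwards [self_mem_nhdsWithin] with z hz
      obtain ⟨_, _, hlamr⟩ := hrfact z hz
      exact Set.mem_Ioi.mpr (by linarith)
  have hinv : Tendsto (fun z : ℝ => (1 - lam * (1 - (1 - p) / z)⁻¹)⁻¹) F atTop :=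
    tendsto_inv_nhdsGT_zero.comp hden
  have hmulT : Tendsto (fun z : ℝ => (p * c) * (1 - lam * (1 - (1 - p) / z)⁻¹)⁻¹) F atTop :=
    hinv.const_mul_atTop (by positivity)
  have hG : Tendsto (fun z : ℝ => (z₀ + 1) - (p * c) * (1 - lam * (1 - (1 - p) / z)⁻¹)⁻¹)
      F atBot := by
    have hneg : Tendsto (fun z : ℝ => -((p * c) * (1 - lam * (1 - (1 - p) / z)⁻¹)⁻¹)) F atBot :=
      tendsto_neg_atTop_atBot.comp hmulT
    have := tendsto_atBot_add_const_left F (z₀ + 1) hneg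
    simpa [sub_eq_add_neg] using this
  apply tendsto_atBot_mono' F _ hG
  have hlt1 : ∀ᶠ z : ℝ in F, z < z₀ + 1 :=
    nhdsWithin_le_nhds (eventually_lt_nhds (lt_add_one z₀))
  filter_upwards [self_mem_nhdsWithin, hlt1] with z hz hz1
  have hts := htsum_low z hz
  have hple : p * (c * (1 - lam * (1 - (1 - p) / z)⁻¹)⁻¹)
      ≤ p * ∑' s : ℕ, survM K μ s * ((1 - (1 - p) / z)⁻¹) ^ (s + 1) :=
    mul_le_mul_of_nonneg_left hts hp.le
  have : p * c * (1 - lam * (1 - (1 - p) / z)⁻¹)⁻¹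
      = p * (c * (1 - lam * (1 - (1 - p) / z)⁻¹)⁻¹) := by ring
  rw [this]
  linarith
end

section
/- Let p ∈ (0,1], T ∈ ℕ, and let Z ∈ [1,∞) be the unique solution of z = p·Σ_{s=0}^{T} P_μ(τ_∂ > s)·(1 − (1−p)/z)^{−(s+1)}; set c := (1 − (1−p)/Z)^{−1}. On Ê := {(t,f) : t ∈ {0,…,T}, f : {0,…,t} → χ} define ν(t,f) := (p/Z)·c^{t+1}·W_t(f) and R((t,f),(s,g)) := p·W_s(g) + (1−p)·𝟙(t ≤ s and g(i) = f(i) for all i ≤ t)·Π_{i=t}^{s−1} K(g(i),g(i+1)). Then (i) Σ_{(t,f)∈Ê} ν(t,f) = 1, i.e. ν is a probability vector on Ê, and (ii) ν is a left eigenvector of R with eigenvalue Z: for every (s,g) ∈ Ê, Σ_{(t,f)∈Ê} ν(t,f)·R((t,f),(s,g)) = Z·ν(s,g). -/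
open Finset Filter

/-- `Ê = {(t,f) : t ∈ {0,…,T}, f : {0,…,t} → χ}`, the state space of the mean
replacement kernel. -/
abbrev Ehat (χ : Type*) (T : ℕ) := (t : Fin (T + 1)) × (Fin (t.1 + 1) → χ)

/-- The mean replacement kernel
`R((t,f),(s,g)) = p·W_s(g) + (1−p)·𝟙(t ≤ s, g|_{[0,t]} = f)·∏_{i=t}^{s−1} K(g i, g (i+1))`. -/
noncomputable def Rker {χ : Type*} [DecidableEq χ] (K : χ → χ → ℝ) (μ : χ → ℝ) (p : ℝ)
    {T : ℕ} (e e' : Ehat χ T) : ℝ :=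
  p * pathW K μ e'.1.1 (pad e'.2)
    + (1 - p) *
      (if e.1.1 ≤ e'.1.1 ∧ ∀ i ∈ Finset.range (e.1.1 + 1), pad e'.2 i = pad e.2 i then
        ∏ i ∈ Finset.Ico e.1.1 e'.1.1, K (pad e'.2 i) (pad e'.2 (i + 1))
      else 0)

/-- `ν(t,f) = (p/Z)·c^{t+1}·W_t(f)` with `c = (1 − (1−p)/Z)⁻¹`. -/
noncomputable def nuE {χ : Type*} (K : χ → χ → ℝ) (μ : χ → ℝ) (p Z : ℝ)
    {T : ℕ} (e : Ehat χ T) : ℝ :=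
  (p / Z) * ((1 - (1 - p) / Z)⁻¹) ^ (e.1.1 + 1) * pathW K μ e.1.1 (pad e.2)

private lemma geom_aux (a : ℝ) (ha : a ≠ 1) (m : ℕ) :
    1 + a * ∑ t ∈ Finset.range m, ((1 - a)⁻¹) ^ (t + 1) = ((1 - a)⁻¹) ^ m := by
  have h1a : (1 : ℝ) - a ≠ 0 := sub_ne_zero.mpr (Ne.symm ha)
  induction m with
  | zero => simp
  | succ m ih =>
    rw [Finset.sum_range_succ, mul_add, ← add_assoc, ih]
    field_simp
    linear_combination (-((1 - a)⁻¹ ^ m)) * mul_inv_cancel₀ h1a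

/-- With `Z` the unique fixed point of Proposition 4.1 (finite horizon `T`), the measure
`ν(t,f) = (p/Z)·c^{t+1}·W_t(f)` is a probability vector on `Ê` and a left eigenvector of
the mean replacement kernel `R` with eigenvalue `Z`. -/
theorem nu_left_eigenvector
    {χ : Type*} [Fintype χ] [Nonempty χ] [DecidableEq χ]
    (K : χ → χ → ℝ) (hK0 : ∀ x y, 0 ≤ K x y) (hK1 : ∀ x, ∑ y, K x y ≤ 1)
    (μ : χ → ℝ) (hμ0 : ∀ x, 0 ≤ μ x) (hμ1 : ∑ x, μ x = 1)
    (p : ℝ) (hp : 0 < p) (hp1 : p ≤ 1) (T : ℕ)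
    (Z : ℝ) (hZ1 : 1 ≤ Z)
    (hZeq : Z = p * ∑ s ∈ Finset.range (T + 1),
      surv K μ s * ((1 - (1 - p) / Z)⁻¹) ^ (s + 1)) :
    (∑ e : Ehat χ T, nuE K μ p Z e = 1) ∧
    (∀ e' : Ehat χ T, ∑ e : Ehat χ T, nuE K μ p Z e * Rker K μ p e e' = Z * nuE K μ p Z e') := by
  have hZpos : (0:ℝ) < Z := lt_of_lt_of_le one_pos hZ1
  have hZ0 : Z ≠ 0 := ne_of_gt hZpos
  have ha1 : (1 - p) / Z ≠ 1 := by
    have h1 : (1 - p) / Z ≤ 1 - p := div_le_self (by linarith) hZ1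
    exact ne_of_lt (lt_of_le_of_lt h1 (by linarith))
  have hsig : ∀ (F : Ehat χ T → ℝ),
      ∑ e : Ehat χ T, F e = ∑ t : Fin (T + 1), ∑ f : Fin (t.1 + 1) → χ, F ⟨t, f⟩ := by
    intro F
    rw [← Finset.univ_sigma_univ, Finset.sum_sigma]
  have hone : ∑ e : Ehat χ T, nuE K μ p Z e = 1 := by
    rw [hsig (nuE K μ p Z)]
    have hinner : ∀ t : Fin (T + 1), ∑ f : Fin (t.1 + 1) → χ, nuE K μ p Z ⟨t, f⟩
        = p / Z * ((1 - (1 - p) / Z)⁻¹) ^ (t.1 + 1) * surv K μ t.1 := by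
      intro t
      simp only [nuE]
      rw [← Finset.mul_sum]
      rfl
    simp only [hinner]
    rw [Fin.sum_univ_eq_sum_range
      (fun j => p / Z * ((1 - (1 - p) / Z)⁻¹) ^ (j + 1) * surv K μ j) (T + 1)]
    have : ∑ j ∈ Finset.range (T + 1), p / Z * ((1 - (1 - p) / Z)⁻¹) ^ (j + 1) * surv K μ j
        = (p * ∑ s ∈ Finset.range (T + 1), surv K μ s * ((1 - (1 - p) / Z)⁻¹) ^ (s + 1)) / Z := by
      rw [Finset.mul_sum, Finset.sum_div]
      exact Finset.sum_congr rfl (fun j _ => by ring)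
    rw [this, ← hZeq, div_self hZ0]
  refine ⟨hone, ?_⟩
  rintro ⟨s, g⟩
  set W : ℝ := pathW K μ s.1 (pad g) with hW
  have key : ∀ (t : Fin (T + 1)) (f : Fin (t.1 + 1) → χ),
      nuE K μ p Z ⟨t, f⟩ * Rker K μ p ⟨t, f⟩ ⟨s, g⟩
      = nuE K μ p Z ⟨t, f⟩ * (p * W)
        + (if t.1 ≤ s.1 ∧ f = (fun i => pad g i.1) then
            (1 - p) * (p / Z * ((1 - (1 - p) / Z)⁻¹) ^ (t.1 + 1) * W)
          else 0) := by
    intro t f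
    simp only [Rker, mul_add, hW]
    congr 1
    by_cases hts : t.1 ≤ s.1
    · by_cases hf : f = fun i : Fin (t.1 + 1) => pad g i.1
      · subst hf
        have hag : ∀ j ≤ t.1, pad (fun i : Fin (t.1 + 1) => pad g i.1) j = pad g j := by
          intro j hj
          simp [pad, Nat.min_eq_left hj]
        have hcond : ∀ i ∈ Finset.range (t.1 + 1),
            pad g i = pad (fun i : Fin (t.1 + 1) => pad g i.1) i := by
          intro i hi
          rw [hag i (Nat.lt_succ_iff.mp (Finset.mem_range.mp hi))]
        rw [if_pos ⟨hts, hcond⟩, if_pos ⟨hts, rfl⟩]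
        have hpath : pathW K μ t.1 (pad fun i : Fin (t.1 + 1) => pad g i.1)
            = pathW K μ t.1 (pad g) := by
          unfold pathW
          rw [hag 0 (Nat.zero_le _)]
          congr 1
          refine Finset.prod_congr rfl (fun i hi => ?_)
          have hi' := Finset.mem_range.mp hi
          rw [hag i (le_of_lt hi'), hag (i + 1) hi']
        have hmerge : pathW K μ t.1 (pad g) * ∏ i ∈ Finset.Ico t.1 s.1, K (pad g i) (pad g (i + 1))
            = pathW K μ s.1 (pad g) := by
          unfold pathW
          rw [mul_assoc, Finset.range_eq_Ico, Finset.prod_Ico_consecutive _ (Nat.zero_le _) hts, Finset.range_eq_Ico]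
        simp only [nuE, hpath]
        linear_combination ((1 - p) * (p / Z * ((1 - (1 - p) / Z)⁻¹) ^ (t.1 + 1))) * hmerge
      · rw [if_neg, if_neg]
        · simp
        · rintro ⟨-, hf'⟩
          exact hf hf'
        · rintro ⟨-, hcond⟩
          apply hf
          funext i
          have h1 : pad g i.1 = pad f i.1 :=
            hcond i.1 (Finset.mem_range.mpr i.isLt)
          have h2 : pad f i.1 = f i := by
            simp [pad, Nat.min_eq_left (Nat.lt_succ_iff.mp i.isLt)]
          rw [h1, h2]
    · rw [if_neg (fun h => hts h.1), if_neg (fun h => hts h.1)]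
      simp
  rw [hsig (fun e => nuE K μ p Z e * Rker K μ p e ⟨s, g⟩)]
  simp only [key, Finset.sum_add_distrib]
  have h1 : ∑ t : Fin (T + 1), ∑ f : Fin (t.1 + 1) → χ, nuE K μ p Z ⟨t, f⟩ * (p * W)
      = p * W := by
    simp only [← Finset.sum_mul]
    rw [← hsig (nuE K μ p Z), hone, one_mul]
  rw [h1]
  have h2a : ∀ t : Fin (T + 1),
      (∑ f : Fin (t.1 + 1) → χ, if t.1 ≤ s.1 ∧ f = (fun i => pad g i.1) then
          (1 - p) * (p / Z * ((1 - (1 - p) / Z)⁻¹) ^ (t.1 + 1) * W) else 0)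
      = if t.1 ≤ s.1 then (1 - p) * (p / Z * ((1 - (1 - p) / Z)⁻¹) ^ (t.1 + 1) * W) else 0 := by
    intro t
    by_cases hts : t.1 ≤ s.1
    · simp [hts, Finset.sum_ite_eq']
    · simp [hts]
  simp only [h2a]
  rw [Fin.sum_univ_eq_sum_range
    (fun j => if j ≤ s.1 then (1 - p) * (p / Z * ((1 - (1 - p) / Z)⁻¹) ^ (j + 1) * W) else 0)
    (T + 1)]
  rw [← Finset.sum_filter]
  have hfil : (Finset.range (T + 1)).filter (· ≤ s.1) = Finset.range (s.1 + 1) := by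
    ext j
    simp only [Finset.mem_filter, Finset.mem_range, Nat.lt_succ_iff]
    have := s.isLt
    omega
  rw [hfil]
  have hS : ∑ j ∈ Finset.range (s.1 + 1), (1 - p) * (p / Z * ((1 - (1 - p) / Z)⁻¹) ^ (j + 1) * W)
      = ((1 - p) * (p / Z) * W) * ∑ j ∈ Finset.range (s.1 + 1), ((1 - (1 - p) / Z)⁻¹) ^ (j + 1) := by
    rw [Finset.mul_sum]
    exact Finset.sum_congr rfl (fun j _ => by ring)
  rw [hS]
  have hgeom := geom_aux ((1 - p) / Z) ha1 (s.1 + 1)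
  have hZZ : ∀ X : ℝ, Z * (p / Z * X) = p * X := by
    intro X
    field_simp
  simp only [nuE]
  rw [mul_assoc (p / Z), hZZ]
  linear_combination (p * W) * hgeom
end

section
/- (Remark 3.2: rigidity of fixed points when p = 0.) Let T ∈ ℕ and let Ê := {(t,f) : t ∈ {0,…,T}, f : {0,…,t} → χ}. Suppose m : Ê → ℝ is nonnegative, not identically zero, and satisfies the p = 0 fixed-point equation: M·m(s,g) = Σ_{t=0}^{s} m(t, g|_{{0,…,t}})·Π_{i=t}^{s−1} K(g(i),g(i+1)) for every (s,g) ∈ Ê, where M := Σ_{(t,f)∈Ê} m(t,f). Then M = 1, and for every (t,f) ∈ Ê with m(t,f) > 0 and t < T one has Σ_{y∈χ} K(f(t), y) = 0 (i.e. the chain is killed in one step, with probability one, from every state occupied by the support of m before the final time). In particular, a nonzero fixed point with some mass at a level t < T can exist only if killing from the relevant states is immediate. -/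
open Finset Filter

/-- Restriction `(s,g) ↦ (t, g|_{{0,…,t}})` for `t ≤ s`. -/
def restrictE {χ : Type*} {T : ℕ} (e : Ehat χ T) (t : ℕ) (h : t ≤ e.1.1) : Ehat χ T :=
  ⟨⟨t, Nat.lt_of_le_of_lt h e.1.isLt⟩, fun i => e.2 (Fin.castLE (Nat.succ_le_succ h) i)⟩

/-- One-step extension of a path by a new value `y`. -/
noncomputable def extE {χ : Type*} {T : ℕ} (e : Ehat χ T) (h : e.1.1 < T) (y : χ) : Ehat χ T :=
  ⟨⟨e.1.1 + 1, by omega⟩, fun i => if hi : i.1 ≤ e.1.1 then e.2 ⟨i.1, by omega⟩ else y⟩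

lemma pad_eq {χ : Type*} {n : ℕ} (f : Fin (n + 1) → χ) (i : ℕ) (h : i ≤ n) :
    pad f i = f ⟨i, Nat.lt_succ_of_le h⟩ := by
  unfold pad; congr 1; exact Fin.ext (Nat.min_eq_left h)

lemma pad_restrict {χ : Type*} {T : ℕ} (e : Ehat χ T) (t : ℕ) (h : t ≤ e.1.1)
    (i : ℕ) (hi : i ≤ t) :
    pad (restrictE e t h).2 i = pad e.2 i := by
  rw [pad_eq (n := (restrictE e t h).1.1) _ i hi, pad_eq _ i (hi.trans h)]
  rfl

/-- Remark 3.2 (rigidity of fixed points when `p = 0`): if `m : Ê → ℝ` is nonnegative,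
not identically zero, and satisfies the `p = 0` fixed-point equation
`M·m(s,g) = ∑_{t=0}^{s} m(t, g|_{{0,…,t}})·∏_{i=t}^{s−1} K(g i, g (i+1))` with
`M = ∑_{(t,f)∈Ê} m(t,f)`, then `M = 1` and, from every state occupied by the support of
`m` before the final time, the chain is killed in one step with probability one:
`m(t,f) > 0` and `t < T` imply `∑_y K(f t, y) = 0`. -/
theorem rigidity_of_fixed_points_p_zero
    {χ : Type*} [Fintype χ] [Nonempty χ]
    (K : χ → χ → ℝ) (hK0 : ∀ x y, 0 ≤ K x y) (hK1 : ∀ x, ∑ y, K x y ≤ 1)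
    (T : ℕ) (m : Ehat χ T → ℝ)
    (hm0 : ∀ e, 0 ≤ m e) (hmne : ∃ e, m e ≠ 0)
    (hfix : ∀ e : Ehat χ T,
      (∑ x : Ehat χ T, m x) * m e
        = ∑ t ∈ (Finset.range (e.1.1 + 1)).attach,
            m (restrictE e t.1 (Nat.lt_succ_iff.mp (Finset.mem_range.mp t.2)))
              * ∏ i ∈ Finset.Ico t.1 e.1.1, K (pad e.2 i) (pad e.2 (i + 1))) :
    (∑ x : Ehat χ T, m x) = 1 ∧
    (∀ e : Ehat χ T, 0 < m e → e.1.1 < T → ∑ y, K (pad e.2 e.1.1) y = 0) := by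
  set M := ∑ x : Ehat χ T, m x with hM
  -- dite form of the fixed point equation
  have hfix' : ∀ (n : ℕ) (e : Ehat χ T) (hn : e.1.1 = n), M * m e
      = ∑ t ∈ Finset.range (n + 1),
          (if ht : t ≤ n then
            m (restrictE e t (by omega)) * ∏ i ∈ Finset.Ico t n, K (pad e.2 i) (pad e.2 (i+1))
          else 0) := by
    intro n e hn
    subst hn
    rw [hfix e, ← Finset.sum_attach (Finset.range (e.1.1 + 1))
      (fun t => if ht : t ≤ e.1.1 then
        m (restrictE e t ht) * ∏ i ∈ Finset.Ico t e.1.1, K (pad e.2 i) (pad e.2 (i+1)) else 0)]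
    refine Finset.sum_congr rfl fun t _ => ?_
    rw [dif_pos (Nat.lt_succ_iff.mp (Finset.mem_range.mp t.2))]
  -- base case: level 0
  have hbase : ∀ e : Ehat χ T, e.1.1 = 0 → M * m e = m e := by
    intro e he
    obtain ⟨⟨s, hsT⟩, g⟩ := e
    simp only at he
    subst he
    have h1 := hfix' 0 ⟨⟨0, hsT⟩, g⟩ rfl
    simp only [Finset.sum_range_one, dif_pos (le_refl 0)] at h1
    simp at h1; exact h1
  -- key recursion
  have key : ∀ (n : ℕ) (e : Ehat χ T) (hn : e.1.1 = n + 1),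
      M * m e = M * m (restrictE e n (by omega)) * K (pad e.2 n) (pad e.2 (n+1)) + m e := by
    intro n e hn
    obtain ⟨⟨s, hsT⟩, g⟩ := e
    simp only at hn
    subst hn
    have h1 := hfix' (n+1) ⟨⟨n+1, hsT⟩, g⟩ rfl
    rw [Finset.sum_range_succ, dif_pos (le_refl (n+1))] at h1
    have hlast : (restrictE ⟨⟨n+1, hsT⟩, g⟩ (n+1) (le_refl (n+1)) : Ehat χ T)
        = ⟨⟨n+1, hsT⟩, g⟩ := rfl
    rw [hlast, Finset.Ico_self, Finset.prod_empty, mul_one] at h1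
    have hnle : n ≤ (⟨⟨n+1, hsT⟩, g⟩ : Ehat χ T).1.1 := by simp
    set e' : Ehat χ T := restrictE ⟨⟨n+1, hsT⟩, g⟩ n hnle with he'
    have h2 := hfix' n e' rfl
    have hsum : ∑ t ∈ Finset.range (n + 1),
          (if ht : t ≤ n + 1 then
            m (restrictE ⟨⟨n+1, hsT⟩, g⟩ t (by exact ht)) *
              ∏ i ∈ Finset.Ico t (n+1), K (pad g i) (pad g (i+1))
          else 0)
        = (M * m e') * K (pad g n) (pad g (n+1)) := by
      rw [h2, Finset.sum_mul]
      refine Finset.sum_congr rfl fun t ht => ?_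
      have htn : t ≤ n := Nat.lt_succ_iff.mp (Finset.mem_range.mp ht)
      rw [dif_pos (htn.trans (Nat.le_succ n)), dif_pos htn]
      have hres : restrictE (⟨⟨n+1, hsT⟩, g⟩ : Ehat χ T) t (by exact htn.trans (Nat.le_succ n)) = restrictE e' t (by exact htn) := rfl
      rw [hres, Finset.prod_Ico_succ_top htn, ← mul_assoc]
      congr 1
      have hpads : ∀ i ∈ Finset.Ico t n,
          K (pad g i) (pad g (i+1)) = K (pad e'.snd i) (pad e'.snd (i+1)) := by
        intro i hi
        obtain ⟨hti, hin⟩ := Finset.mem_Ico.mp hi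
        rw [he', pad_restrict _ n hnle i (le_of_lt hin), pad_restrict _ n hnle (i+1) hin]
      rw [Finset.prod_congr rfl hpads]
    rw [hsum] at h1
    exact h1
  -- positivity of M
  obtain ⟨e0, he0⟩ := hmne
  have hm0pos : 0 < m e0 := lt_of_le_of_ne (hm0 e0) (Ne.symm he0)
  have hMpos : 0 < M :=
    lt_of_lt_of_le hm0pos (Finset.single_le_sum (fun i _ => hm0 i) (Finset.mem_univ e0))
  -- M = 1
  have hM1 : M = 1 := by
    by_contra hne
    have hsub : M - 1 ≠ 0 := sub_ne_zero.mpr hne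
    have hzero : ∀ n (e : Ehat χ T), e.1.1 = n → m e = 0 := by
      intro n
      induction n with
      | zero =>
        intro e he
        have h := hbase e he
        have : (M - 1) * m e = 0 := by ring_nf; linarith
        exact (mul_eq_zero.mp this).resolve_left hsub
      | succ n ih =>
        intro e he
        have hk := key n e he
        have hres0 : m (restrictE e n (by omega)) = 0 := ih _ rfl
        rw [hres0] at hk
        have : (M - 1) * m e = 0 := by ring_nf; ring_nf at hk; linarith
        exact (mul_eq_zero.mp this).resolve_left hsub
    exact he0 (hzero e0.1.1 e0 rfl)
  refine ⟨hM1, fun e hme heT => ?_⟩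
  refine Finset.sum_eq_zero fun y _ => ?_
  set e' : Ehat χ T := extE e heT y with he'
  have hk := key e.1.1 e' rfl
  rw [hM1, one_mul, one_mul] at hk
  have hres : restrictE e' e.1.1 (Nat.le_succ _) = e := by
    obtain ⟨⟨s, hsT⟩, g⟩ := e
    show (⟨⟨s, _⟩, fun i => _⟩ : Ehat χ T) = ⟨⟨s, hsT⟩, g⟩
    congr 1
    funext i
    show (if hi : ((Fin.castLE _ i : Fin (s+1+1))).1 ≤ s then g ⟨_, _⟩ else y) = g i
    split
    · exact congrArg g (Fin.ext rfl)
    · exact absurd (Nat.lt_succ_iff.mp i.isLt) (by assumption)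
  have hpad1 : pad e'.2 e.1.1 = pad e.2 e.1.1 := by
    rw [pad_eq e'.2 e.1.1 (Nat.le_succ _), pad_eq e.2 e.1.1 (le_refl _)]
    show (if hi : e.1.1 ≤ e.1.1 then e.2 ⟨e.1.1, _⟩ else y) = _
    rw [dif_pos (le_refl _)]
  have hpad2 : pad e'.2 (e.1.1 + 1) = y := by
    rw [pad_eq e'.2 (e.1.1+1) (le_refl _)]
    show (if hi : e.1.1 + 1 ≤ e.1.1 then e.2 ⟨e.1.1+1, _⟩ else y) = y
    rw [dif_neg (by omega)]
  rw [hres, hpad1, hpad2] at hk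
  have : m e * K (pad e.2 e.1.1) y = 0 := by linarith
  exact (mul_eq_zero.mp this).resolve_left (ne_of_gt hme)
end
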